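/- arXiv:2505.19276 — 6 statements merged into one kernel-verified Lean document; each statement's English description precedes it below -/
import Mathlib

section
/- Fix X ∈ L∞(P). If 0 < α'' < α' < α < 1 and ES^α(X) = ES^{α'}(X), then ES^{α''}(X) = ES^α(X). That is, if expected shortfall of X agrees at two distinct quantile levels, it is constant at all smaller levels. -/
open MeasureTheory
open scoped ENNReal NNReal Pointwise

/-! Mixing an admissible measure at level `α` and one at level `α''` with weights `l + m = 1`
gives an admissible measure at the level `β` with `1/β = l/α + m/α''`, so `t ↦ ES^{1/t}(X)` is
concave on `[1, ∞)`; it is also nondecreasing. A concave nondecreasing function that takes the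
same value at `1/α < 1/α'` is constant from `1/α` on. -/

namespace ExpectedShortfall

variable {Ω : Type*} [MeasurableSpace Ω] {P : Measure Ω}

def admissibleExpectations (P : Measure Ω) (X : Ω → ℝ) (β : ℝ) : Set ℝ :=
  {r : ℝ | ∃ Q : Measure Ω, IsProbabilityMeasure Q ∧ Q ≪ P ∧
    Q.rnDeriv P ≤ᵐ[P] (fun _ => ENNReal.ofReal (1 / β)) ∧ r = ∫ ω, X ω ∂Q}

theorem _root_.MeasureTheory.MemLp.integrable_of_absolutelyContinuous {X : Ω → ℝ}
    (hX : MemLp X ∞ P) {Q : Measure Ω} [IsFiniteMeasure Q] (hQ : Q ≪ P) : Integrable X Q :=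
  .of_bound (hX.aestronglyMeasurable.mono_ac hQ) _ (hQ.ae_le (ae_le_lpNorm_exponent_top hX))

theorem integral_le_lpNorm_of_absolutelyContinuous {X : Ω → ℝ} (hX : MemLp X ∞ P)
    {Q : Measure Ω} [IsProbabilityMeasure Q] (hQ : Q ≪ P) : ∫ ω, X ω ∂Q ≤ lpNorm X ∞ P :=
  calc ∫ ω, X ω ∂Q ≤ ‖∫ ω, X ω ∂Q‖ := le_abs_self _
    _ ≤ lpNorm X ∞ P := by
      simpa using norm_integral_le_of_norm_le_const (hQ.ae_le (ae_le_lpNorm_exponent_top hX))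

theorem bddAbove_admissibleExpectations {X : Ω → ℝ} (hX : MemLp X ∞ P) (β : ℝ) :
    BddAbove (admissibleExpectations P X β) := by
  refine ⟨lpNorm X ∞ P, ?_⟩
  rintro _ ⟨Q, hQ, hQP, -, rfl⟩
  exact integral_le_lpNorm_of_absolutelyContinuous hX hQP

theorem integral_mem_admissibleExpectations [IsProbabilityMeasure P] (X : Ω → ℝ) {β : ℝ}
    (hβ : 0 < β) (hβ1 : β ≤ 1) : ∫ ω, X ω ∂P ∈ admissibleExpectations P X β := by
  refine ⟨P, inferInstance, .rfl, ?_, rfl⟩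
  filter_upwards [Measure.rnDeriv_self P] with ω hω
  rw [hω]
  exact ENNReal.one_le_ofReal.mpr (one_le_one_div hβ hβ1)

theorem admissibleExpectations_subset_of_le (X : Ω → ℝ) {β β' : ℝ} (hβ : 0 < β)
    (hββ' : β ≤ β') : admissibleExpectations P X β' ⊆ admissibleExpectations P X β := by
  rintro r ⟨Q, hQ, hQP, hdens, rfl⟩
  refine ⟨Q, hQ, hQP, hdens.trans (.of_forall fun _ => ?_), rfl⟩
  exact ENNReal.ofReal_le_ofReal (one_div_le_one_div_of_le hβ hββ')

theorem isProbabilityMeasure_smul_add_smul {Q Q' : Measure Ω} [IsProbabilityMeasure Q]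
    [IsProbabilityMeasure Q'] {l m : ℝ≥0} (hlm : l + m = 1) :
    IsProbabilityMeasure (l • Q + m • Q') := by
  constructor
  simp [← ENNReal.coe_add, hlm]

theorem rnDeriv_smul_add_smul_le [SigmaFinite P] {Q Q' : Measure Ω} [IsFiniteMeasure Q]
    [IsFiniteMeasure Q'] (l m : ℝ≥0) {c c' : ℝ≥0∞} (hQ : Q.rnDeriv P ≤ᵐ[P] fun _ => c)
    (hQ' : Q'.rnDeriv P ≤ᵐ[P] fun _ => c') :
    (l • Q + m • Q').rnDeriv P ≤ᵐ[P] fun _ => l * c + m * c' := by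
  filter_upwards [Measure.rnDeriv_add (l • Q) (m • Q') P, Measure.rnDeriv_smul_left Q P l,
    Measure.rnDeriv_smul_left Q' P m, hQ, hQ'] with ω hadd hl hm hω hω'
  rw [hadd, Pi.add_apply, hl, hm, Pi.smul_apply, Pi.smul_apply, ENNReal.smul_def,
    ENNReal.smul_def, smul_eq_mul, smul_eq_mul]
  gcongr

theorem smul_add_smul_subset_admissibleExpectations [SigmaFinite P] {X : Ω → ℝ}
    (hX : MemLp X ∞ P) {α α' β : ℝ} (hα : 0 ≤ α) (hα' : 0 ≤ α') {l m : ℝ≥0} (hlm : l + m = 1)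
    (hβ : (l : ℝ) * (1 / α) + m * (1 / α') = 1 / β) :
    (l : ℝ) • admissibleExpectations P X α + (m : ℝ) • admissibleExpectations P X α' ⊆
      admissibleExpectations P X β := by
  rintro _ ⟨_, ⟨_, ⟨Q, hQ, hQP, hdens, rfl⟩, rfl⟩, _, ⟨_, ⟨Q', hQ', hQ'P, hdens', rfl⟩, rfl⟩, rfl⟩
  refine ⟨l • Q + m • Q', isProbabilityMeasure_smul_add_smul hlm,
    (hQP.smul_left _).add_left (hQ'P.smul_left _), ?_, ?_⟩
  · refine (rnDeriv_smul_add_smul_le l m hdens hdens').trans (.of_forall fun _ => le_of_eq ?_)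
    dsimp only
    rw [← hβ, ENNReal.ofReal_add (by positivity) (by positivity), ENNReal.ofReal_mul l.coe_nonneg,
      ENNReal.ofReal_mul m.coe_nonneg, ENNReal.ofReal_coe_nnreal, ENNReal.ofReal_coe_nnreal]
  · rw [integral_add_measure ((hX.integrable_of_absolutelyContinuous hQP).smul_measure_nnreal)
      ((hX.integrable_of_absolutelyContinuous hQ'P).smul_measure_nnreal),
      integral_smul_nnreal_measure, integral_smul_nnreal_measure]
    rfl

theorem mul_sSup_add_mul_sSup_le {A B C : Set ℝ} (hA : A.Nonempty) (hA' : BddAbove A)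
    (hB : B.Nonempty) (hB' : BddAbove B) (hC : BddAbove C) {l m : ℝ} (hl : 0 ≤ l) (hm : 0 ≤ m)
    (hsub : l • A + m • B ⊆ C) : l * sSup A + m * sSup B ≤ sSup C :=
  calc l * sSup A + m * sSup B = sSup (l • A + m • B) := by
        rw [csSup_add (hA.smul_set) (hA'.smul_of_nonneg hl) (hB.smul_set) (hB'.smul_of_nonneg hm),
          Real.sSup_smul_of_nonneg hl, Real.sSup_smul_of_nonneg hm, smul_eq_mul, smul_eq_mul]
    _ ≤ sSup C := csSup_le_csSup hC (hA.smul_set.add hB.smul_set) hsub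

end ExpectedShortfall

open ExpectedShortfall

/-- If expected shortfall of `X ∈ L∞(P)` agrees at two distinct quantile
levels `α' < α`, then it takes the same value at every smaller level `α'' < α'`. -/
theorem expectedShortfall_constancy_propagation
    {Ω : Type*} [MeasurableSpace Ω] (P : Measure Ω) [IsProbabilityMeasure P]
    (ES : ℝ → Lp ℝ ⊤ P → ℝ)
    (hES : ∀ (β : ℝ) (X : Lp ℝ ⊤ P), ES β X =
      sSup {r : ℝ | ∃ Q : Measure Ω, IsProbabilityMeasure Q ∧ Q ≪ P ∧
        Q.rnDeriv P ≤ᵐ[P] (fun _ => ENNReal.ofReal (1 / β)) ∧ r = ∫ ω, X ω ∂Q})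
    (X : Lp ℝ ⊤ P) (α α' α'' : ℝ)
    (h0 : 0 < α'') (h1 : α'' < α') (h2 : α' < α) (h3 : α < 1)
    (heq : ES α X = ES α' X) :
    ES α'' X = ES α X := by
  set S := admissibleExpectations P X
  have hX := Lp.memLp X
  have hES' (β : ℝ) : ES β X = sSup (S β) := hES β X
  have hne {β : ℝ} (hβ : 0 < β) (hβ1 : β ≤ 1) : (S β).Nonempty :=
    ⟨_, integral_mem_admissibleExpectations X hβ hβ1⟩
  have hbdd (β : ℝ) : BddAbove (S β) := bddAbove_admissibleExpectations hX β
  obtain ⟨l, m, hl, hm, hlm, hcomb⟩ : 1 / α' ∈ openSegment ℝ (1 / α) (1 / α'') := by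
    rw [openSegment_eq_Ioo (one_div_lt_one_div_of_lt h0 (h1.trans h2))]
    exact ⟨one_div_lt_one_div_of_lt (h0.trans h1) h2, one_div_lt_one_div_of_lt h0 h1⟩
  lift l to ℝ≥0 using hl.le
  lift m to ℝ≥0 using hm.le
  have hconcave : l * sSup (S α) + m * sSup (S α'') ≤ sSup (S α') :=
    mul_sSup_add_mul_sSup_le (hne (by linarith) h3.le) (hbdd α) (hne h0 (by linarith))
      (hbdd α'') (hbdd α') l.coe_nonneg m.coe_nonneg
      (smul_add_smul_subset_admissibleExpectations hX (by linarith) h0.le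
        (by exact_mod_cast hlm) hcomb)
  have hanti : sSup (S α') ≤ sSup (S α'') :=
    csSup_le_csSup (hbdd α'') (hne (by linarith) (by linarith))
      (admissibleExpectations_subset_of_le X h0 h1.le)
  rw [hES', hES'] at heq ⊢
  have hsplit : (l : ℝ) * sSup (S α) + m * sSup (S α) = sSup (S α) := by
    rw [← add_mul, hlm, one_mul]
  have hle : sSup (S α'') ≤ sSup (S α) := le_of_mul_le_mul_left (by linarith) hm
  linarith
end

section
/- Let (A, 𝒜, μ) be a finite measure space with 0 < μ(A) < ∞ and (ρ_a)_{a∈A} a measurable family of risk measures (meaning a ↦ ρ_a(X_a) is 𝒜-measurable for every measurable allocation). Suppose ∫_A |ρ_a(0)| dμ < ∞ and there exists a probability measure Q ≪ P with ∫_A ρ_a*(Q) dμ < ∞ (each ρ_a*(Q) < ∞). Then the integral infimal convolution (□_{a∈A} ρ_a μ(da))(X) = inf over X-feasible allocations ∫_A ρ_a(X_a) dμ is finite for every X ∈ L∞(P), and satisfies the lower bound (□ ρ_a μ(da))(X) ≥ E^Q[X] − ∫_A ρ_a*(Q) dμ. -/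
/-!
Pairing a feasible allocation with the density `dQ/dP ∈ L¹(P)` turns the Fenchel–Young
inequality `ρ_a(Z) ≥ E^Q[Z] - ρ_a*(Q)` into the lower bound after integrating over `A`, because
the Gelfand integral of the allocation pairs with `dQ/dP` to `E^Q[X]`. The uniform split
`X_a = X / μ(A)` is feasible, and its risk profile is integrable since monotonicity and
cash-additivity give `|ρ_a(Z) - ρ_a(0)| ≤ ‖Z‖_∞`.
-/

open MeasureTheory

/-- An allocation `(Xa a)_{a ∈ A} ⊆ L∞(P)` is `X`-feasible if it is Gelfand integrable
(each pairing with `Y ∈ L¹(P)` is μ-integrable) and its Gelfand integral is `X`, i.e.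
`∫_A E^P[Xa a · Y] dμ = E^P[X · Y]` for all `Y ∈ L¹(P)`. -/
def Feasible {A Ω : Type*} [MeasurableSpace A] [MeasurableSpace Ω] (μ : Measure A)
    (P : Measure Ω) [IsProbabilityMeasure P] (X : Lp ℝ ⊤ P) (Xa : A → Lp ℝ ⊤ P) : Prop :=
  (∀ Y : Lp ℝ 1 P, Integrable (fun a => ∫ ω, Xa a ω * Y ω ∂P) μ) ∧
  (∀ Y : Lp ℝ 1 P, (∫ a, (∫ ω, Xa a ω * Y ω ∂P) ∂μ) = ∫ ω, X ω * Y ω ∂P)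

namespace MeasureTheory.Lp

variable {Ω : Type*} [MeasurableSpace Ω] {P : Measure Ω}

theorem ae_norm_le_norm_top {E : Type*} [NormedAddCommGroup E] (f : Lp E ⊤ P) :
    ∀ᵐ ω ∂P, ‖f ω‖ ≤ ‖f‖ := by
  filter_upwards [ae_le_eLpNormEssSup (f := ⇑f) (μ := P)] with ω hω
  rw [norm_def, eLpNorm_exponent_top]
  exact (ENNReal.toReal_mono (eLpNorm_exponent_top (f := ⇑f) ▸ eLpNorm_ne_top f) hω).trans_eq'
    (toReal_enorm _).symm

theorem integral_smul_mul (c : ℝ) (X : Lp ℝ ⊤ P) (Y : Lp ℝ 1 P) :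
    ∫ ω, (c • X) ω * Y ω ∂P = c * ∫ ω, X ω * Y ω ∂P := by
  rw [← integral_const_mul]
  refine integral_congr_ae ?_
  filter_upwards [coeFn_smul c X] with ω hω
  rw [hω, Pi.smul_apply, smul_eq_mul, mul_assoc]

variable [IsFiniteMeasure P]

theorem le_const_norm (f : Lp ℝ ⊤ P) : f ≤ Lp.const ⊤ P ‖f‖ := by
  rw [← coeFn_le]
  filter_upwards [ae_norm_le_norm_top f, coeFn_const (μ := P) (p := ⊤) ‖f‖] with ω hf hc
  rw [hc]
  exact (le_abs_self _).trans hf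

theorem const_neg_norm_le (f : Lp ℝ ⊤ P) : Lp.const ⊤ P (-‖f‖) ≤ f := by
  rw [← coeFn_le]
  filter_upwards [ae_norm_le_norm_top f, coeFn_const (μ := P) (p := ⊤) (-‖f‖)] with ω hf hc
  rw [hc]
  exact neg_le_of_abs_le hf

end MeasureTheory.Lp

section RiskMeasure

variable {Ω : Type*} [MeasurableSpace Ω] {P : Measure Ω} [IsFiniteMeasure P]

theorem abs_sub_apply_zero_le_norm {ρ : Lp ℝ ⊤ P → ℝ} (hmono : Monotone ρ)
    (hcash : ∀ (X : Lp ℝ ⊤ P) (c : ℝ), ρ (X + Lp.const ⊤ P c) = ρ X + c) (Z : Lp ℝ ⊤ P) :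
    |ρ Z - ρ 0| ≤ ‖Z‖ := by
  have hconst : ∀ c, ρ (Lp.const ⊤ P c) = ρ 0 + c := fun c => by simpa using hcash 0 c
  have hupper := hmono (Lp.le_const_norm Z)
  have hlower := hmono (Lp.const_neg_norm_le Z)
  rw [hconst] at hupper hlower
  exact abs_sub_le_iff.2 ⟨by linarith, by linarith⟩

theorem integrable_apply_of_integrable_apply_zero {A : Type*} [MeasurableSpace A]
    {μ : Measure A} [IsFiniteMeasure μ] {ρ : A → Lp ℝ ⊤ P → ℝ} (hmono : ∀ a, Monotone (ρ a))
    (hcash : ∀ a (X : Lp ℝ ⊤ P) (c : ℝ), ρ a (X + Lp.const ⊤ P c) = ρ a X + c)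
    (hρ0 : Integrable (fun a => ρ a 0) μ) {Z : Lp ℝ ⊤ P}
    (hZ : AEMeasurable (fun a => ρ a Z) μ) : Integrable (fun a => ρ a Z) μ := by
  have hdiff : Integrable (fun a => ρ a Z - ρ a 0) μ :=
    .of_bound (hZ.sub hρ0.aemeasurable).aestronglyMeasurable ‖Z‖
      (.of_forall fun a => abs_sub_apply_zero_le_norm (hmono a) (hcash a) Z)
  exact (hρ0.add hdiff).congr (.of_forall fun a => add_sub_cancel (ρ a 0) (ρ a Z))

end RiskMeasure

section Density

variable {Ω : Type*} [MeasurableSpace Ω]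

noncomputable def rnDerivL1 (Q P : Measure Ω) [IsFiniteMeasure Q] [SigmaFinite P] : Lp ℝ 1 P :=
  (Measure.integrable_toReal_rnDeriv (μ := Q) (ν := P)).toL1 _

theorem integral_mul_rnDerivL1 {Q P : Measure Ω} [IsFiniteMeasure Q] [SigmaFinite P]
    (hQP : Q ≪ P) (f : Ω → ℝ) : ∫ ω, f ω * rnDerivL1 Q P ω ∂P = ∫ ω, f ω ∂Q := by
  rw [← integral_rnDeriv_smul hQP]
  refine integral_congr_ae ?_
  filter_upwards [Integrable.coeFn_toL1 (Measure.integrable_toReal_rnDeriv (μ := Q) (ν := P))]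
    with ω hω
  rw [rnDerivL1, hω, smul_eq_mul, mul_comm]

end Density

section Feasible

variable {A Ω : Type*} [MeasurableSpace A] [MeasurableSpace Ω] {μ : Measure A}
  {P : Measure Ω} [IsProbabilityMeasure P]

theorem feasible_const_smul [IsFiniteMeasure μ] (hμ : μ Set.univ ≠ 0) (X : Lp ℝ ⊤ P) :
    Feasible μ P X (fun _ => (μ.real Set.univ)⁻¹ • X) := by
  refine ⟨fun Y => integrable_const _, fun Y => ?_⟩
  have hreal : μ.real Set.univ ≠ 0 := (measureReal_ne_zero_iff (measure_ne_top μ _)).2 hμ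
  rw [integral_const, smul_eq_mul, Lp.integral_smul_mul, mul_inv_cancel_left₀ hreal]

theorem Feasible.integral_mul_sub_integral_le {ρ : A → Lp ℝ ⊤ P → ℝ} {g : A → ℝ}
    {X : Lp ℝ ⊤ P} {Xa : A → Lp ℝ ⊤ P} (hfeas : Feasible μ P X Xa)
    (hρ : Integrable (fun a => ρ a (Xa a)) μ) (hg : Integrable g μ) (Y : Lp ℝ 1 P)
    (hpenalty : ∀ a (Z : Lp ℝ ⊤ P), ∫ ω, Z ω * Y ω ∂P - ρ a Z ≤ g a) :
    ∫ ω, X ω * Y ω ∂P - ∫ a, g a ∂μ ≤ ∫ a, ρ a (Xa a) ∂μ := by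
  rw [← hfeas.2 Y, ← integral_sub (hfeas.1 Y) hg]
  exact integral_mono ((hfeas.1 Y).sub hg) hρ fun a => by linarith [hpenalty a (Xa a)]

end Feasible

theorem integral_infConvolution_finite_and_lower_bound_general
    {A Ω : Type*} [MeasurableSpace A] [MeasurableSpace Ω]
    (μ : Measure A) [IsFiniteMeasure μ] (hμ : μ Set.univ ≠ 0)
    (P : Measure Ω) [IsProbabilityMeasure P]
    (ρ : A → Lp ℝ ⊤ P → ℝ)
    -- each ρ_a is a risk measure
    (hmono : ∀ a, ∀ X Y : Lp ℝ ⊤ P, Y ≤ X → ρ a Y ≤ ρ a X)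
    (hcash : ∀ a, ∀ (X : Lp ℝ ⊤ P) (c : ℝ), ρ a (X + Lp.const ⊤ P c) = ρ a X + c)
    -- measurable family: measurable allocations have measurable risk profiles
    (hmeas : ∀ Xa : A → Lp ℝ ⊤ P,
      (∀ Y : Lp ℝ 1 P, AEMeasurable (fun a => ∫ ω, Xa a ω * Y ω ∂P) μ) →
      AEMeasurable (fun a => ρ a (Xa a)) μ)
    -- ∫_A |ρ_a(0)| dμ < ∞
    (hρ0 : Integrable (fun a => ρ a 0) μ)
    -- a probability measure Q ≪ P whose conjugates are finite with integrable values
    (Q : Measure Ω) [IsProbabilityMeasure Q] (hQP : Q ≪ P)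
    (g : A → ℝ) (hg : Integrable g μ)
    (hconj : ∀ a, (⨆ X : Lp ℝ ⊤ P, (((∫ ω, X ω ∂Q) - ρ a X : ℝ) : EReal)) = ((g a : ℝ) : EReal)) :
    ∀ X : Lp ℝ ⊤ P,
      {r : ℝ | ∃ Xa : A → Lp ℝ ⊤ P, Feasible μ P X Xa ∧
        Integrable (fun a => ρ a (Xa a)) μ ∧ r = ∫ a, ρ a (Xa a) ∂μ}.Nonempty ∧
      BddBelow {r : ℝ | ∃ Xa : A → Lp ℝ ⊤ P, Feasible μ P X Xa ∧
        Integrable (fun a => ρ a (Xa a)) μ ∧ r = ∫ a, ρ a (Xa a) ∂μ} ∧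
      (∫ ω, X ω ∂Q) - (∫ a, g a ∂μ) ≤
        sInf {r : ℝ | ∃ Xa : A → Lp ℝ ⊤ P, Feasible μ P X Xa ∧
          Integrable (fun a => ρ a (Xa a)) μ ∧ r = ∫ a, ρ a (Xa a) ∂μ} := by
  intro X
  set S := {r : ℝ | ∃ Xa : A → Lp ℝ ⊤ P, Feasible μ P X Xa ∧
    Integrable (fun a => ρ a (Xa a)) μ ∧ r = ∫ a, ρ a (Xa a) ∂μ}
  have hpenalty : ∀ a (Z : Lp ℝ ⊤ P), ∫ ω, Z ω * rnDerivL1 Q P ω ∂P - ρ a Z ≤ g a := by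
    intro a Z
    rw [integral_mul_rnDerivL1 hQP]
    exact_mod_cast (le_iSup (fun Z => (((∫ ω, Z ω ∂Q) - ρ a Z : ℝ) : EReal)) Z).trans_eq (hconj a)
  have hlower : ∀ r ∈ S, (∫ ω, X ω ∂Q) - ∫ a, g a ∂μ ≤ r := by
    rintro _ ⟨Xa, hfeas, hρ, rfl⟩
    simpa only [integral_mul_rnDerivL1 hQP] using
      hfeas.integral_mul_sub_integral_le hρ hg _ hpenalty
  have hnonempty : S.Nonempty :=
    ⟨_, _, feasible_const_smul hμ X,
      integrable_apply_of_integrable_apply_zero (fun a _ _ h => hmono a _ _ h) hcash hρ0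
        (hmeas _ fun _ => aemeasurable_const), rfl⟩
  exact ⟨hnonempty, ⟨_, hlower⟩, le_csInf hnonempty hlower⟩

/-- Under integrability of `a ↦ |ρ_a(0)|` and the existence of a probability
measure `Q ≪ P` with `∫_A ρ_a*(Q) dμ < ∞`, the integral infimal convolution
`(□ ρ_a μ(da))(X) = inf over X-feasible allocations of ∫_A ρ_a(X_a) dμ` is finite for every
`X ∈ L∞(P)` and bounded below by `E^Q[X] − ∫_A ρ_a*(Q) dμ`. -/
theorem integral_infConvolution_finite_and_lower_bound
    {A Ω : Type*} [MeasurableSpace A] [MeasurableSpace Ω]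
    [MeasurableSpace.CountablyGenerated Ω]
    (μ : Measure A) [IsFiniteMeasure μ] [μ.IsComplete] (hμ : μ Set.univ ≠ 0)
    (P : Measure Ω) [IsProbabilityMeasure P]
    (ρ : A → Lp ℝ ⊤ P → ℝ)
    -- each ρ_a is a risk measure
    (hmono : ∀ a, ∀ X Y : Lp ℝ ⊤ P, Y ≤ X → ρ a Y ≤ ρ a X)
    (hcash : ∀ a, ∀ (X : Lp ℝ ⊤ P) (c : ℝ), ρ a (X + Lp.const ⊤ P c) = ρ a X + c)
    (hconv : ∀ a, ∀ (X Y : Lp ℝ ⊤ P) (l : ℝ), 0 ≤ l → l ≤ 1 →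
      ρ a (l • X + (1 - l) • Y) ≤ l * ρ a X + (1 - l) * ρ a Y)
    -- measurable family: measurable allocations have measurable risk profiles
    (hmeas : ∀ Xa : A → Lp ℝ ⊤ P,
      (∀ Y : Lp ℝ 1 P, AEMeasurable (fun a => ∫ ω, Xa a ω * Y ω ∂P) μ) →
      AEMeasurable (fun a => ρ a (Xa a)) μ)
    -- ∫_A |ρ_a(0)| dμ < ∞
    (hρ0 : Integrable (fun a => ρ a 0) μ)
    -- a probability measure Q ≪ P whose conjugates are finite with integrable values
    (Q : Measure Ω) [IsProbabilityMeasure Q] (hQP : Q ≪ P)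
    (g : A → ℝ) (hg : Integrable g μ)
    (hconj : ∀ a, (⨆ X : Lp ℝ ⊤ P, (((∫ ω, X ω ∂Q) - ρ a X : ℝ) : EReal)) = ((g a : ℝ) : EReal)) :
    ∀ X : Lp ℝ ⊤ P,
      {r : ℝ | ∃ Xa : A → Lp ℝ ⊤ P, Feasible μ P X Xa ∧
        Integrable (fun a => ρ a (Xa a)) μ ∧ r = ∫ a, ρ a (Xa a) ∂μ}.Nonempty ∧
      BddBelow {r : ℝ | ∃ Xa : A → Lp ℝ ⊤ P, Feasible μ P X Xa ∧
        Integrable (fun a => ρ a (Xa a)) μ ∧ r = ∫ a, ρ a (Xa a) ∂μ} ∧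
      (∫ ω, X ω ∂Q) - (∫ a, g a ∂μ) ≤
        sInf {r : ℝ | ∃ Xa : A → Lp ℝ ⊤ P, Feasible μ P X Xa ∧
          Integrable (fun a => ρ a (Xa a)) μ ∧ r = ∫ a, ρ a (Xa a) ∂μ} :=
  integral_infConvolution_finite_and_lower_bound_general μ hμ P ρ hmono hcash hmeas hρ0 Q hQP g hg
    hconj
end

section
/- Let C ⊆ L¹(P) be a nonempty, convex, uniformly integrable, L¹-closed set of probability densities. Then the intersection over γ > Γ (for fixed Γ ≥ 1) of the sets γC̃ equals ΓC̃, where C̃ = { Y ∈ L¹(P) : 0 ≤ Y ≤ Z for some Z ∈ C }. That is, ⋂_{γ>Γ} γC̃ = ΓC̃. -/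
/-!
Write `C̃ = {Y | 0 ≤ Y ∧ ∃ Z ∈ C, Y ≤ Z} = [0, ∞) ∩ lowerClosure C`. It is star-shaped about `0`,
so `Γ C̃ ⊆ γ C̃` for `γ > Γ`; conversely, if `Y ∈ γ C̃` for all `γ > Γ` then `γ⁻¹ Y ∈ C̃` and
`γ⁻¹ Y → Γ⁻¹ Y`, so everything reduces to `lowerClosure C` being closed in `L¹`.

Let `Y_n → Y` with `Y_n ≤ Z_n ∈ C`. Uniform integrability makes the measures `Z_n • P` uniformly
absolutely continuous with respect to `P`, so their setwise limit along an ultrafilter is again a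
measure, with a density `f`. Since `(L¹)* = L^∞` (via the Riesz representation on `L² ⊆ L¹`) and
bounded functions are uniform limits of simple ones, setwise convergence is weak convergence
`Z_n ⇀ f`. A closed convex set is weakly closed by Hahn–Banach, so `f ∈ C`, and integrating over
sets gives `Y ≤ f`.
-/

open MeasureTheory Pointwise Filter Topology
open scoped ENNReal NNReal

theorem Convex.mem_of_forall_tendsto_dual {E : Type*} [TopologicalSpace E] [AddCommGroup E]
    [Module ℝ E] [IsTopologicalAddGroup E] [ContinuousSMul ℝ E] [LocallyConvexSpace ℝ E]
    {C : Set E} (hconv : Convex ℝ C) (hclosed : IsClosed C) {ι : Type*} {l : Filter ι} [l.NeBot]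
    {x : ι → E} {y : E} (hx : ∀ᶠ i in l, x i ∈ C)
    (hy : ∀ φ : E →L[ℝ] ℝ, Tendsto (fun i => φ (x i)) l (𝓝 (φ y))) : y ∈ C := by
  by_contra hyC
  obtain ⟨φ, u, hφC, huy⟩ := geometric_hahn_banach_closed_point hconv hclosed hyC
  exact huy.not_ge (le_of_tendsto (hy φ) (hx.mono fun i hi => (hφC _ hi).le))

theorem starConvex_zero_Ici_inter_lowerClosure {E : Type*} [AddCommGroup E] [PartialOrder E]
    [Module ℝ E] [PosSMulMono ℝ E] [SMulPosMono ℝ E] (C : Set E) :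
    StarConvex ℝ 0 (Set.Ici 0 ∩ (lowerClosure C : Set E)) :=
  starConvex_zero_iff.mpr fun _ ⟨hY, Z, hZC, hYZ⟩ _ ha₀ ha₁ =>
    ⟨smul_nonneg ha₀ hY, Z, hZC, (smul_le_of_le_one_left hY ha₁).trans hYZ⟩

theorem StarConvex.iInter_smul_Ioi_eq_of_isClosed {E : Type*} [TopologicalSpace E] [AddCommGroup E]
    [Module ℝ E] [ContinuousSMul ℝ E] {S : Set E} (hS : StarConvex ℝ 0 S) (hSc : IsClosed S)
    {Γ : ℝ} (hΓ : 0 < Γ) : ⋂ γ ∈ Set.Ioi Γ, γ • S = Γ • S := by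
  ext Y
  simp only [Set.mem_iInter, Set.mem_Ioi]
  constructor
  · intro hY
    rw [Set.mem_smul_set_iff_inv_smul_mem₀ hΓ.ne']
    refine hSc.mem_of_tendsto (((continuousAt_inv₀ hΓ.ne').tendsto.mono_left
      (nhdsWithin_le_nhds (s := Set.Ioi Γ))).smul_const Y) ?_
    filter_upwards [self_mem_nhdsWithin] with γ hγ
    exact (Set.mem_smul_set_iff_inv_smul_mem₀ (hΓ.trans hγ).ne' _ _).mp (hY γ hγ)
  · rintro ⟨W, hW, rfl⟩ γ hγ
    have hγ₀ : 0 < γ := hΓ.trans hγ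
    rw [Set.mem_smul_set_iff_inv_smul_mem₀ hγ₀.ne', smul_smul]
    exact hS.smul_mem hW (by positivity) (inv_mul_le_one_of_le₀ hγ.le hγ₀.le)

namespace MeasureTheory

variable {Ω : Type*} [MeasurableSpace Ω]

instance Lp.instPosSMulMono {p : ℝ≥0∞} {μ : Measure Ω} : PosSMulMono ℝ (Lp ℝ p μ) where
  smul_le_smul_of_nonneg_left c hc X Y hXY := by
    rw [← Lp.coeFn_le] at hXY ⊢
    filter_upwards [hXY, Lp.coeFn_smul c X, Lp.coeFn_smul c Y] with ω hω hX hY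
    simpa [hX, hY] using mul_le_mul_of_nonneg_left hω hc

instance Lp.instSMulPosMono {p : ℝ≥0∞} {μ : Measure Ω} : SMulPosMono ℝ (Lp ℝ p μ) where
  smul_le_smul_of_nonneg_right X hX c d hcd := by
    rw [← Lp.coeFn_le]
    filter_upwards [(Lp.coeFn_nonneg X).mpr hX, Lp.coeFn_smul c X, Lp.coeFn_smul d X]
      with ω hω hc hd
    simpa [hc, hd] using mul_le_mul_of_nonneg_right hcd hω

theorem UniformIntegrable.comp {ι κ : Type*} {μ : Measure Ω} {f : ι → Ω → ℝ} {p : ℝ≥0∞}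
    (hf : UniformIntegrable f p μ) (g : κ → ι) : UniformIntegrable (f ∘ g) p μ :=
  ⟨fun k => hf.1 (g k), fun _ hε => (hf.2.1 hε).imp fun _ hδ => ⟨hδ.1, fun k => hδ.2 (g k)⟩,
    hf.2.2.imp fun _ hc k => hc (g k)⟩

theorem ae_abs_le_of_forall_abs_setIntegral_le {μ : Measure Ω} [IsFiniteMeasure μ] {g : Ω → ℝ}
    (hg : Integrable g μ) {B : ℝ} (h : ∀ s, MeasurableSet s → |∫ ω in s, g ω ∂μ| ≤ B * μ.real s) :
    ∀ᵐ ω ∂μ, |g ω| ≤ B := by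
  have hup : g ≤ᵐ[μ] fun _ => B :=
    ae_le_of_forall_setIntegral_le hg (integrable_const B) fun s hs _ => by
      simpa [mul_comm] using (le_abs_self _).trans (h s hs)
  have hlow : (fun _ => -B) ≤ᵐ[μ] g :=
    ae_le_of_forall_setIntegral_le (integrable_const _) hg fun s hs _ => by
      simpa [mul_comm] using neg_le_of_abs_le (h s hs)
  filter_upwards [hup, hlow] with ω h₁ h₂ using abs_le.mpr ⟨h₂, h₁⟩

theorem exists_measurable_abs_le_ae_eq {μ : Measure Ω} {g : Ω → ℝ} (hg : AEMeasurable g μ)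
    {B : ℝ} (hB : 0 ≤ B) (hgB : ∀ᵐ ω ∂μ, |g ω| ≤ B) :
    ∃ g' : Ω → ℝ, Measurable g' ∧ (∀ ω, |g' ω| ≤ B) ∧ g =ᵐ[μ] g' := by
  refine ⟨fun ω => max (-B) (min B (hg.mk g ω)), measurable_const.max
    (measurable_const.min hg.measurable_mk), fun ω => abs_le.mpr ⟨le_max_left _ _,
    max_le (by linarith) (min_le_left _ _)⟩, ?_⟩
  filter_upwards [hgB, hg.ae_eq_mk] with ω hω hmk
  rw [← hmk, min_eq_right (abs_le.mp hω).2, max_eq_right (abs_le.mp hω).1]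

variable {P : Measure Ω}

theorem Lp.eLpNorm_indicator_eq_ofReal_setIntegral {Z : Lp ℝ 1 P} (hZ : 0 ≤ Z) {s : Set Ω}
    (hs : MeasurableSet s) : eLpNorm (s.indicator Z) 1 P = ENNReal.ofReal (∫ ω in s, Z ω ∂P) := by
  have hZ' : 0 ≤ᵐ[P] Z := (Lp.coeFn_nonneg Z).mpr hZ
  rw [eLpNorm_one_eq_lintegral_enorm, ofReal_integral_eq_lintegral_ofReal
    (L1.integrable_coeFn Z).integrableOn (ae_restrict_of_ae hZ')]
  simp_rw [enorm_indicator_eq_indicator_enorm]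
  rw [lintegral_indicator hs]
  refine lintegral_congr_ae ?_
  filter_upwards [ae_restrict_of_ae hZ'] with ω hω using Real.enorm_of_nonneg hω

theorem uniformIntegrable_of_forall_abs_setIntegral_le {C : Set (Lp ℝ 1 P)}
    (hnn : ∀ Z ∈ C, 0 ≤ Z) {R : ℝ} (hR : ∀ Z ∈ C, ∫ ω, Z ω ∂P ≤ R)
    (hui : ∀ ε : ℝ, 0 < ε → ∃ δ : ℝ, 0 < δ ∧ ∀ Z ∈ C, ∀ s : Set Ω, MeasurableSet s →
      P s ≤ ENNReal.ofReal δ → |∫ ω in s, Z ω ∂P| ≤ ε) :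
    UniformIntegrable (fun Z : C => (Z : Ω → ℝ)) 1 P := by
  refine ⟨fun Z => Lp.aestronglyMeasurable _, fun ε hε => ?_, ⟨R.toNNReal, fun Z => ?_⟩⟩
  · obtain ⟨δ, hδ, hδε⟩ := hui ε hε
    refine ⟨δ, hδ, fun Z s hs hPs => ?_⟩
    rw [Lp.eLpNorm_indicator_eq_ofReal_setIntegral (hnn _ Z.2) hs]
    exact ENNReal.ofReal_le_ofReal ((le_abs_self _).trans (hδε _ Z.2 s hs hPs))
  · have := Lp.eLpNorm_indicator_eq_ofReal_setIntegral (hnn _ Z.2) MeasurableSet.univ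
    rw [Set.indicator_univ, setIntegral_univ] at this
    rw [this, ENNReal.ofNNReal_toNNReal]
    exact ENNReal.ofReal_le_ofReal (hR _ Z.2)

theorem abs_integral_mul_le {g : Ω → ℝ} {B : ℝ}
    (hgB : ∀ ω, |g ω| ≤ B) (X : Lp ℝ 1 P) : |∫ ω, g ω * X ω ∂P| ≤ B * ‖X‖ := by
  rw [L1.norm_eq_integral_norm, ← integral_const_mul]
  refine (abs_integral_le_integral_abs).trans (integral_mono_of_nonneg
    (Eventually.of_forall fun _ => abs_nonneg _) ((L1.integrable_coeFn X).norm.const_mul B)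
    (Eventually.of_forall fun ω => ?_))
  simp only [abs_mul, Real.norm_eq_abs]
  exact mul_le_mul_of_nonneg_right (hgB ω) (abs_nonneg _)

theorem abs_integral_sub_integral_mul_le {g : Ω → ℝ} (hg : AEStronglyMeasurable g P) {B : ℝ}
    (hgB : ∀ ω, |g ω| ≤ B) (h : SimpleFunc Ω ℝ) {δ : ℝ} (hgh : ∀ ω, |g ω - h ω| ≤ δ)
    (X : Lp ℝ 1 P) : |∫ ω, g ω * X ω ∂P - ∫ ω, h ω * X ω ∂P| ≤ δ * ‖X‖ := by
  have hhX : Integrable (fun ω => h ω * X ω) P := (L1.integrable_coeFn X).simpleFunc_mul h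
  rw [← integral_sub ((L1.integrable_coeFn X).bdd_mul hg (Eventually.of_forall hgB)) hhX]
  simp only [← sub_mul]
  exact abs_integral_mul_le hgh X

theorem lipschitzWith_integral_mul {g : Ω → ℝ} (hg : AEStronglyMeasurable g P) {B : ℝ≥0}
    (hgB : ∀ ω, |g ω| ≤ B) : LipschitzWith B fun X : Lp ℝ 1 P => ∫ ω, g ω * X ω ∂P := by
  refine LipschitzWith.of_dist_le_mul fun X Y => ?_
  have hint : ∀ V : Lp ℝ 1 P, Integrable (fun ω => g ω * V ω) P := fun V =>
    (L1.integrable_coeFn V).bdd_mul hg (Eventually.of_forall fun ω => hgB ω)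
  rw [Real.dist_eq, dist_eq_norm, ← integral_sub (hint X) (hint Y)]
  calc |∫ ω, g ω * X ω - g ω * Y ω ∂P| = |∫ ω, g ω * (X - Y) ω ∂P| := by
        congr 1
        refine integral_congr_ae ?_
        filter_upwards [Lp.coeFn_sub X Y] with ω hω
        rw [hω, Pi.sub_apply, mul_sub]
    _ ≤ B * ‖X - Y‖ := abs_integral_mul_le hgB _

theorem SimpleFunc.exists_abs_sub_le {g : Ω → ℝ} (hg : Measurable g) {B : ℝ}
    (hgB : ∀ ω, |g ω| ≤ B) {ε : ℝ} (hε : 0 < ε) : ∃ h : SimpleFunc Ω ℝ, ∀ ω, |g ω - h ω| ≤ ε := by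
  have hmeas : Measurable fun ω => ε * ⌊g ω / ε⌋ :=
    measurable_const.mul (measurable_from_top.comp (hg.div_const ε).floor)
  have hrange : Set.range (fun ω => ε * ⌊g ω / ε⌋) ⊆
      (fun j : ℤ => ε * j) '' Set.Icc ⌊-B / ε⌋ ⌊B / ε⌋ := by
    rintro _ ⟨ω, rfl⟩
    refine ⟨_, ⟨Int.floor_mono ?_, Int.floor_mono ?_⟩, rfl⟩ <;>
      gcongr <;> linarith [abs_le.mp (hgB ω)]
  refine ⟨⟨fun ω => ε * ⌊g ω / ε⌋, fun c => hmeas (measurableSet_singleton c),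
    ((Set.finite_Icc _ _).image _).subset hrange⟩, fun ω => ?_⟩
  have hfract : g ω - ε * ⌊g ω / ε⌋ = ε * Int.fract (g ω / ε) := by
    rw [Int.fract]; field_simp
  change |g ω - ε * ⌊g ω / ε⌋| ≤ ε
  rw [hfract, abs_of_nonneg (mul_nonneg hε.le (Int.fract_nonneg _))]
  exact mul_le_of_le_one_right hε.le (Int.fract_lt_one _).le

theorem tendsto_integral_simpleFunc_mul {ι : Type*} {l : Filter ι} {Z : ι → Lp ℝ 1 P}
    {f : Lp ℝ 1 P}
    (hZ : ∀ s, MeasurableSet s → Tendsto (fun i => ∫ ω in s, Z i ω ∂P) l (𝓝 (∫ ω in s, f ω ∂P)))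
    (h : SimpleFunc Ω ℝ) : Tendsto (fun i => ∫ ω, h ω * Z i ω ∂P) l (𝓝 (∫ ω, h ω * f ω ∂P)) := by
  induction h using SimpleFunc.induction with
  | @const c s hs =>
    have hind : ∀ X : Lp ℝ 1 P, ∫ ω, (SimpleFunc.piecewise s hs (SimpleFunc.const Ω c)
        (SimpleFunc.const Ω 0)) ω * X ω ∂P = c * ∫ ω in s, X ω ∂P := fun X => by
      simp only [SimpleFunc.coe_piecewise, SimpleFunc.coe_const, Set.piecewise_eq_indicator,
        Function.const_zero, ← Set.indicator_mul_left, integral_indicator hs, Function.const_apply,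
        integral_const_mul]
    simp only [hind]
    exact (hZ _ hs).const_mul c
  | @add h₁ h₂ _ ih₁ ih₂ =>
    have hadd : ∀ X : Lp ℝ 1 P, ∫ ω, (h₁ + h₂) ω * X ω ∂P =
        ∫ ω, h₁ ω * X ω ∂P + ∫ ω, h₂ ω * X ω ∂P := fun X => by
      simp only [SimpleFunc.coe_add, Pi.add_apply, add_mul]
      exact integral_add ((L1.integrable_coeFn X).simpleFunc_mul h₁)
        ((L1.integrable_coeFn X).simpleFunc_mul h₂)
    simp only [hadd]
    exact ih₁.add ih₂

theorem exists_measure_eq_of_additive_of_absolutelyContinuous [IsFiniteMeasure P]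
    (m : Set Ω → ℝ≥0∞) (hm_empty : m ∅ = 0)
    (hm_add : ∀ s t, MeasurableSet t → Disjoint s t → m (s ∪ t) = m s + m t)
    (hm_top : ∀ s, m s ≠ ∞)
    (hm_small : ∀ ε : ℝ, 0 < ε → ∃ δ : ℝ, 0 < δ ∧ ∀ s, MeasurableSet s →
      P s ≤ ENNReal.ofReal δ → m s ≤ ENNReal.ofReal ε) :
    ∃ μ : Measure Ω, IsFiniteMeasure μ ∧ μ ≪ P ∧ ∀ s, MeasurableSet s → μ s = m s := by
  have hSet : IsSetRing {s : Set Ω | MeasurableSet s} :=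
    ⟨MeasurableSet.empty, fun _ _ => MeasurableSet.union, fun _ _ => MeasurableSet.diff⟩
  let M := hSet.addContent_of_union m hm_empty fun {s t} _ ht hst => hm_add s t ht hst
  -- for a finite additive content, continuity at `∅` is equivalent to σ-additivity
  have hM_tendsto : ∀ ⦃s : ℕ → Set Ω⦄, (∀ n, MeasurableSet (s n)) → Antitone s →
      ⋂ n, s n = ∅ → Tendsto (fun n => M (s n)) atTop (𝓝 0) := by
    intro s hs hanti hempty
    have hP : Tendsto (fun n => P (s n)) atTop (𝓝 0) := by
      simpa [hempty, Function.comp_def] using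
        tendsto_measure_iInter_atTop (fun n => (hs n).nullMeasurableSet) hanti
          ⟨0, measure_ne_top P _⟩
    rw [ENNReal.tendsto_nhds_zero]
    intro ε hε
    obtain ⟨r, hr, hrε⟩ := ENNReal.lt_iff_exists_nnreal_btwn.mp hε
    obtain ⟨δ, hδ, hmδ⟩ := hm_small r (by exact_mod_cast hr)
    filter_upwards [hP.eventually (ge_mem_nhds (ENNReal.ofReal_pos.mpr hδ))] with n hn
    exact (hmδ (s n) (hs n) hn).trans (by simpa using hrε.le)
  let μ := Measure.ofMeasurable (fun s _ => m s) hm_empty fun f hf hdisj =>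
    addContent_iUnion_eq_sum_of_tendsto_zero hSet M (fun s _ => hm_top s) hM_tendsto hf
      (MeasurableSet.iUnion hf) hdisj
  have hμ : ∀ s, MeasurableSet s → μ s = m s := fun s hs => Measure.ofMeasurable_apply s hs
  refine ⟨μ, ⟨(hμ _ MeasurableSet.univ).trans_lt (hm_top _).lt_top⟩,
    Measure.AbsolutelyContinuous.mk fun s hs hPs => ?_, hμ⟩
  rw [hμ s hs]
  refine le_antisymm (ENNReal.le_of_forall_pos_le_add fun ε hε _ => ?_) zero_le
  obtain ⟨δ, hδ, hmδ⟩ := hm_small ε (by exact_mod_cast hε)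
  simpa using hmδ s hs (by simp [hPs])

theorem exists_measure_tendsto_of_uniformly_absolutelyContinuous [IsFiniteMeasure P]
    {ι : Type*} (U : Ultrafilter ι) (ν : ι → Measure Ω) {c : ℝ≥0∞} (hc : c ≠ ∞)
    (hνc : ∀ i, ν i Set.univ ≤ c)
    (hac : ∀ ε : ℝ, 0 < ε → ∃ δ : ℝ, 0 < δ ∧ ∀ i s, MeasurableSet s →
      P s ≤ ENNReal.ofReal δ → ν i s ≤ ENNReal.ofReal ε) :
    ∃ μ : Measure Ω, IsFiniteMeasure μ ∧ μ ≪ P ∧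
      ∀ s, MeasurableSet s → Tendsto (fun i => ν i s) U (𝓝 (μ s)) := by
  let m : Set Ω → ℝ≥0∞ := fun s => (U.map fun i => ν i s).lim
  have hm : ∀ s, Tendsto (fun i => ν i s) U (𝓝 (m s)) := fun s =>
    Ultrafilter.le_nhds_lim (U.map fun i => ν i s)
  have hm_add : ∀ s t, MeasurableSet t → Disjoint s t → m (s ∪ t) = m s + m t :=
    fun s t ht hst => tendsto_nhds_unique (hm (s ∪ t))
      (by simpa only [measure_union hst ht] using (hm s).add (hm t))
  have hm_top : ∀ s, m s ≠ ∞ := fun s => ne_top_of_le_ne_top hc <| le_of_tendsto (hm s) <|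
    Eventually.of_forall fun i => (measure_mono (Set.subset_univ s)).trans (hνc i)
  obtain ⟨μ, hμfin, hμP, hμ⟩ := exists_measure_eq_of_additive_of_absolutelyContinuous m
    (tendsto_nhds_unique (hm ∅) (by simp)) hm_add hm_top fun ε hε => by
      obtain ⟨δ, hδ, hνδ⟩ := hac ε hε
      exact ⟨δ, hδ, fun s hs hPs =>
        le_of_tendsto (hm s) (Eventually.of_forall fun i => hνδ i s hs hPs)⟩
  exact ⟨μ, hμfin, hμP, fun s hs => hμ s hs ▸ hm s⟩

theorem exists_tendsto_setIntegral_of_uniformIntegrable [IsFiniteMeasure P] {ι : Type*}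
    (U : Ultrafilter ι) {Z : ι → Lp ℝ 1 P} (hZ : ∀ i, 0 ≤ Z i)
    (hui : UniformIntegrable (fun i => (Z i : Ω → ℝ)) 1 P) :
    ∃ f : Lp ℝ 1 P, ∀ s, MeasurableSet s →
      Tendsto (fun i => ∫ ω in s, Z i ω ∂P) U (𝓝 (∫ ω in s, f ω ∂P)) := by
  obtain ⟨-, hunif, c, hc⟩ := hui
  let ν : ι → Measure Ω := fun i => P.withDensity fun ω => ‖Z i ω‖ₑ
  have hν : ∀ i s, MeasurableSet s → ν i s = eLpNorm (s.indicator (Z i)) 1 P := fun i s hs => by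
    rw [withDensity_apply _ hs, eLpNorm_one_eq_lintegral_enorm, ← lintegral_indicator hs]
    simp_rw [enorm_indicator_eq_indicator_enorm]
  have hZν : ∀ i s, MeasurableSet s → ∫ ω in s, Z i ω ∂P = (ν i s).toReal := fun i s hs => by
    rw [withDensity_apply _ hs, ← integral_norm_eq_lintegral_enorm
      (Lp.aestronglyMeasurable _).restrict]
    refine setIntegral_congr_ae hs ?_
    filter_upwards [(Lp.coeFn_nonneg _).mpr (hZ i)] with ω hω _
    exact (Real.norm_of_nonneg hω).symm
  obtain ⟨μ, hμfin, hμP, hνμ⟩ := exists_measure_tendsto_of_uniformly_absolutelyContinuous U ν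
    ENNReal.coe_ne_top (fun i => by simpa [hν i _ MeasurableSet.univ] using hc i)
    fun ε hε => by
      obtain ⟨δ, hδ, hδε⟩ := hunif hε
      exact ⟨δ, hδ, fun i s hs hPs => hν i s hs ▸ hδε i s hs hPs⟩
  have hint : Integrable (fun ω => (μ.rnDeriv P ω).toReal) P := Measure.integrable_toReal_rnDeriv
  refine ⟨hint.toL1 _, fun s hs => ?_⟩
  have hf : ∫ ω in s, (hint.toL1 _ : Ω → ℝ) ω ∂P = (μ s).toReal := by
    rw [setIntegral_congr_ae hs (hint.coeFn_toL1.mono fun ω h _ => h),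
      Measure.setIntegral_toReal_rnDeriv hμP, measureReal_def]
  simp only [hf, hZν _ s hs]
  exact (ENNReal.tendsto_toReal (measure_ne_top μ s)).comp (hνμ s hs)

variable [IsProbabilityMeasure P]

variable (P) in
noncomputable def L2ToL1 : Lp ℝ 2 P →L[ℝ] Lp ℝ 1 P :=
  LinearMap.mkContinuous
    { toFun := fun X => ⟨X, Lp.antitone one_le_two X.2⟩
      map_add' := fun _ _ => rfl
      map_smul' := fun _ _ => rfl } 1
    fun X => by
      simp only [LinearMap.coe_mk, AddHom.coe_mk, one_mul, Lp.norm_def]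
      exact ENNReal.toReal_mono (Lp.eLpNorm_ne_top X)
        (eLpNorm_le_eLpNorm_of_exponent_le one_le_two (Lp.aestronglyMeasurable X))

theorem exists_L2_forall_eq_integral_mul (φ : Lp ℝ 1 P →L[ℝ] ℝ) :
    ∃ g : Lp ℝ 2 P, ∀ X : Lp ℝ 2 P, φ (L2ToL1 P X) = ∫ ω, g ω * X ω ∂P := by
  obtain ⟨g, hg⟩ := (InnerProductSpace.toDual ℝ (Lp ℝ 2 P)).surjective (φ.comp (L2ToL1 P))
  refine ⟨g, fun X => ?_⟩
  rw [← ContinuousLinearMap.comp_apply, ← hg, InnerProductSpace.toDual_apply_apply, L2.inner_def]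
  simp [mul_comm]

theorem abs_setIntegral_le_of_forall_eq_integral_mul {φ : Lp ℝ 1 P →L[ℝ] ℝ} {g : Lp ℝ 2 P}
    (hg : ∀ X : Lp ℝ 2 P, φ (L2ToL1 P X) = ∫ ω, g ω * X ω ∂P) {s : Set Ω} (hs : MeasurableSet s) :
    |∫ ω in s, g ω ∂P| ≤ ‖φ‖ * P.real s := by
  let X : Lp ℝ 2 P := indicatorConstLp 2 hs (measure_ne_top P s) 1
  have hX : L2ToL1 P X = indicatorConstLp 1 hs (measure_ne_top P s) 1 :=
    Lp.ext <| (indicatorConstLp_coeFn : (X : Ω → ℝ) =ᵐ[P] _).trans indicatorConstLp_coeFn.symm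
  have hgX : ∫ ω in s, g ω ∂P = φ (L2ToL1 P X) := by
    rw [hg, ← integral_indicator hs]
    refine integral_congr_ae ?_
    filter_upwards [indicatorConstLp_coeFn (p := 2) (hs := hs) (hμs := measure_ne_top P s)
      (c := (1 : ℝ))] with ω hω
    simp only [X, hω, ← Set.indicator_mul_right, mul_one]
  rw [hgX]
  refine (φ.le_opNorm _).trans_eq ?_
  rw [hX, norm_indicatorConstLp one_ne_zero ENNReal.one_ne_top]
  simp [Measure.real]

theorem exists_measurable_forall_eq_integral_mul (φ : Lp ℝ 1 P →L[ℝ] ℝ) :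
    ∃ g : Ω → ℝ, Measurable g ∧ (∀ ω, |g ω| ≤ ‖φ‖) ∧ ∀ X : Lp ℝ 1 P, φ X = ∫ ω, g ω * X ω ∂P := by
  obtain ⟨g₂, hg₂⟩ := exists_L2_forall_eq_integral_mul φ
  have hg₂int : Integrable (g₂ : Ω → ℝ) P :=
    memLp_one_iff_integrable.mp ((Lp.memLp g₂).mono_exponent one_le_two)
  obtain ⟨g, hg, hgB, hg₂g⟩ := exists_measurable_abs_le_ae_eq
    (Lp.aestronglyMeasurable g₂).aemeasurable (norm_nonneg φ)
    (ae_abs_le_of_forall_abs_setIntegral_le hg₂int fun s hs =>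
      abs_setIntegral_le_of_forall_eq_integral_mul hg₂ hs)
  refine ⟨g, hg, hgB, fun X => ?_⟩
  have hψ : Continuous fun X : Lp ℝ 1 P => ∫ ω, g ω * X ω ∂P :=
    (lipschitzWith_integral_mul (B := ‖φ‖₊) hg.aestronglyMeasurable hgB).continuous
  refine (Lp.simpleFunc.denseRange ENNReal.one_ne_top).induction_on X
    (isClosed_eq φ.continuous hψ) fun f => ?_
  have hf2 : ((f : Lp ℝ 1 P) : Ω →ₘ[P] ℝ) ∈ Lp ℝ 2 P :=
    Lp.mem_Lp_iff_memLp.mpr ((SimpleFunc.memLp_of_isFiniteMeasure _ 2 P).ae_eq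
      (Lp.simpleFunc.toSimpleFunc_eq_toFun f))
  change φ (L2ToL1 P ⟨_, hf2⟩) = _
  rw [hg₂]
  refine integral_congr_ae ?_
  filter_upwards [hg₂g] with ω hω
  rw [hω]

theorem tendsto_dual_of_tendsto_setIntegral {ι : Type*} {l : Filter ι} {Z : ι → Lp ℝ 1 P}
    {f : Lp ℝ 1 P} {R : ℝ} (hR : ∀ i, ‖Z i‖ ≤ R)
    (hZ : ∀ s, MeasurableSet s → Tendsto (fun i => ∫ ω in s, Z i ω ∂P) l (𝓝 (∫ ω in s, f ω ∂P)))
    (φ : Lp ℝ 1 P →L[ℝ] ℝ) : Tendsto (fun i => φ (Z i)) l (𝓝 (φ f)) := by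
  obtain ⟨g, hg, hgB, hφ⟩ := exists_measurable_forall_eq_integral_mul φ
  simp only [hφ]
  rw [Metric.tendsto_nhds]
  intro ε hε
  set K := |R| + ‖f‖ + 1
  have hK : 0 < K := by positivity
  set δ := ε / (4 * K)
  have hδ : 0 < δ := by positivity
  have hδK : δ * K = ε / 4 := by simp only [δ]; field_simp
  obtain ⟨h, hgh⟩ := SimpleFunc.exists_abs_sub_le hg hgB hδ
  have happrox : ∀ X : Lp ℝ 1 P, |∫ ω, g ω * X ω ∂P - ∫ ω, h ω * X ω ∂P| ≤ δ * ‖X‖ := fun X =>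
    abs_integral_sub_integral_mul_le hg.aestronglyMeasurable hgB h hgh X
  filter_upwards [Metric.tendsto_nhds.mp (tendsto_integral_simpleFunc_mul hZ h) (ε / 4)
    (by positivity)] with i hi
  rw [Real.dist_eq] at hi ⊢
  have h₁ : δ * ‖Z i‖ ≤ ε / 4 := hδK ▸ by gcongr; linarith [hR i, le_abs_self R, norm_nonneg f]
  have h₂ : δ * ‖f‖ ≤ ε / 4 := hδK ▸ by gcongr; linarith [abs_nonneg R]
  have e₁ := abs_le.mp (happrox (Z i))
  have e₂ := abs_lt.mp hi
  have e₃ := abs_le.mp (happrox f)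
  rw [abs_lt]
  constructor <;> linarith

theorem isClosed_lowerClosure_of_uniformIntegrable {C : Set (Lp ℝ 1 P)} (hconv : Convex ℝ C)
    (hclosed : IsClosed C) (hnn : ∀ Z ∈ C, 0 ≤ Z)
    (hui : UniformIntegrable (fun Z : C => (Z : Ω → ℝ)) 1 P) :
    IsClosed (lowerClosure C : Set (Lp ℝ 1 P)) := by
  refine isClosed_of_closure_subset fun Y hY => ?_
  obtain ⟨X, hXC, hXY⟩ := mem_closure_iff_seq_limit.mp hY
  choose Z hZC hXZ using hXC
  let U := Ultrafilter.of (atTop : Filter ℕ)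
  have hU : (U : Filter ℕ) ≤ atTop := Ultrafilter.of_le _
  obtain ⟨f, hf⟩ := exists_tendsto_setIntegral_of_uniformIntegrable U (Z := Z)
    (fun n => hnn _ (hZC n)) (hui.comp fun n => ⟨Z n, hZC n⟩)
  obtain ⟨c, hc⟩ := hui.2.2
  have hZc : ∀ n, ‖Z n‖ ≤ c := fun n => by
    rw [Lp.norm_def]
    exact ENNReal.toReal_le_of_le_ofReal c.2 (by simpa using hc ⟨Z n, hZC n⟩)
  have hfC : f ∈ C := hconv.mem_of_forall_tendsto_dual hclosed (Eventually.of_forall hZC)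
    (tendsto_dual_of_tendsto_setIntegral hZc hf)
  refine ⟨f, hfC, (Lp.coeFn_le _ _).mp (ae_le_of_forall_setIntegral_le (L1.integrable_coeFn Y)
    (L1.integrable_coeFn f) fun s hs _ => ?_)⟩
  refine le_of_tendsto_of_tendsto (((continuous_setIntegral s).tendsto Y).comp hXY |>.mono_left hU)
    (hf s hs) (Eventually.of_forall fun n => ?_)
  exact setIntegral_mono_ae (L1.integrable_coeFn _).integrableOn
    (L1.integrable_coeFn _).integrableOn ((Lp.coeFn_le _ _).mpr (hXZ n))

end MeasureTheory

theorem inflation_intersection_general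
    {Ω : Type*} [MeasurableSpace Ω] (P : Measure Ω) [IsProbabilityMeasure P]
    (C : Set (Lp ℝ 1 P))
    (hconv : Convex ℝ C)
    (hclosed : IsClosed C)
    -- every element of C is a probability density
    (hdens : ∀ Z ∈ C, 0 ≤ Z ∧ (∫ ω, Z ω ∂P) = 1)
    -- uniform integrability
    (hui : ∀ ε : ℝ, 0 < ε → ∃ δ : ℝ, 0 < δ ∧ ∀ Z ∈ C, ∀ s : Set Ω, MeasurableSet s →
      P s ≤ ENNReal.ofReal δ → |∫ ω in s, Z ω ∂P| ≤ ε)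
    (Γ : ℝ) (hΓ : 1 ≤ Γ) :
    (⋂ γ ∈ Set.Ioi Γ, γ • {Y : Lp ℝ 1 P | 0 ≤ Y ∧ ∃ Z ∈ C, Y ≤ Z}) =
      Γ • {Y : Lp ℝ 1 P | 0 ≤ Y ∧ ∃ Z ∈ C, Y ≤ Z} := by
  have hnn : ∀ Z ∈ C, 0 ≤ Z := fun Z hZ => (hdens Z hZ).1
  have hCui : UniformIntegrable (fun Z : C => (Z : Ω → ℝ)) 1 P :=
    uniformIntegrable_of_forall_abs_setIntegral_le hnn (fun Z hZ => (hdens Z hZ).2.le) hui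
  exact (starConvex_zero_Ici_inter_lowerClosure C).iInter_smul_Ioi_eq_of_isClosed
    (isClosed_Ici.inter (isClosed_lowerClosure_of_uniformIntegrable hconv hclosed hnn hCui))
    (by linarith)

/-- Let `C ⊆ L¹(P)` be a nonempty, convex, uniformly integrable, `L¹`-closed
set of probability densities, and let `C̃ = {Y ∈ L¹ : 0 ≤ Y ≤ Z for some Z ∈ C}`. Then for
every `Γ ≥ 1`, `⋂_{γ > Γ} γ C̃ = Γ C̃`. -/
theorem inflation_intersection
    {Ω : Type*} [MeasurableSpace Ω] (P : Measure Ω) [IsProbabilityMeasure P]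
    (C : Set (Lp ℝ 1 P))
    (hne : C.Nonempty)
    (hconv : Convex ℝ C)
    (hclosed : IsClosed C)
    -- every element of C is a probability density
    (hdens : ∀ Z ∈ C, 0 ≤ Z ∧ (∫ ω, Z ω ∂P) = 1)
    -- uniform integrability
    (hui : ∀ ε : ℝ, 0 < ε → ∃ δ : ℝ, 0 < δ ∧ ∀ Z ∈ C, ∀ s : Set Ω, MeasurableSet s →
      P s ≤ ENNReal.ofReal δ → |∫ ω in s, Z ω ∂P| ≤ ε)
    (Γ : ℝ) (hΓ : 1 ≤ Γ) :
    (⋂ γ ∈ Set.Ioi Γ, γ • {Y : Lp ℝ 1 P | 0 ≤ Y ∧ ∃ Z ∈ C, Y ≤ Z}) =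
      Γ • {Y : Lp ℝ 1 P | 0 ≤ Y ∧ ∃ Z ∈ C, Y ≤ Z} :=
  inflation_intersection_general P C hconv hclosed hdens hui Γ hΓ
end

section
/- Suppose (ρ_a)_{a∈A} is a measurable family of risk measures and the integral infimal convolution φ(X) = (□_{a∈A} ρ_a μ(da))(X) is finite for all X. Then an X-feasible allocation (X_a)_{a∈A} is Pareto efficient if and only if ∫_A ρ_a(X_a) dμ = φ(X). -/
/-!
(⇒) If some feasible allocation had smaller total risk than `(X_a)`, redistributing the saving
as cash (the Kaldor–Hicks transfer) would make every agent strictly better off.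

(⇐) A Pareto improvement `(Y_a)` with integrable risk has strictly smaller total risk. If its risk
is not integrable, the gain `g = ρ_a(X_a) - ρ_a(Y_a) ≥ 0` is not integrable, so `∫_{g ≤ N} g` is
unbounded in `N`. Let the agents of `s = {g ≤ N}` take `Y_a + W` and the others keep `X_a`, where
`μ(s) W` is the Gelfand integral of `Y_a - X_a` over `sᶜ`. It exists, with `μ(s) ‖W‖` bounded
independently of `s`, because the weak integrand is a bounded operator `L¹(P) → L¹(μ)` (closed
graph theorem) and `L¹(P)* = L∞(P)`. Monotonicity and cash additivity make each `ρ_a`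
1-Lipschitz, so these feasible allocations have total risk at most `∫ ρ_a(X_a) - ∫_s g + C`,
which is unbounded below.
-/

open MeasureTheory

/-- An `X`-feasible allocation is Pareto efficient if no `X`-feasible allocation makes a
non-null set of agents strictly better off while making no agent worse off (μ-a.e.). -/
def ParetoEfficient {A Ω : Type*} [MeasurableSpace A] [MeasurableSpace Ω] (μ : Measure A)
    (P : Measure Ω) [IsProbabilityMeasure P] (ρ : A → Lp ℝ ⊤ P → ℝ)
    (X : Lp ℝ ⊤ P) (Xa : A → Lp ℝ ⊤ P) : Prop :=
  Feasible μ P X Xa ∧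
    ¬∃ Ya : A → Lp ℝ ⊤ P, Feasible μ P X Ya ∧
      (∀ᵐ a ∂μ, ρ a (Ya a) ≤ ρ a (Xa a)) ∧ μ {a | ρ a (Ya a) < ρ a (Xa a)} ≠ 0

open Filter

section Pairing

variable {Ω : Type*} [MeasurableSpace Ω]

noncomputable def linftyPairing (P : Measure Ω) : Lp ℝ ⊤ P →L[ℝ] Lp ℝ 1 P →L[ℝ] ℝ :=
  (ContinuousLinearMap.mul ℝ ℝ).lpPairing P ⊤ 1

theorem linftyPairing_apply {P : Measure Ω} (f : Lp ℝ ⊤ P) (Y : Lp ℝ 1 P) :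
    linftyPairing P f Y = ∫ ω, f ω * Y ω ∂P :=
  (ContinuousLinearMap.mul ℝ ℝ).lpPairing_eq_integral f Y

theorem linftyPairing_const {P : Measure Ω} [IsFiniteMeasure P] (c : ℝ) (Y : Lp ℝ 1 P) :
    linftyPairing P (Lp.const ⊤ P c) Y = c * ∫ ω, Y ω ∂P := by
  rw [linftyPairing_apply, ← integral_const_mul]
  refine integral_congr_ae ?_
  filter_upwards [Lp.coeFn_const (p := ⊤) (μ := P) (c := c)] with ω hω
  rw [hω, Function.const_apply]

noncomputable def MeasureTheory.L2.toL1 (P : Measure Ω) [IsFiniteMeasure P] :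
    Lp ℝ 2 P →L[ℝ] Lp ℝ 1 P :=
  (ContinuousLinearMap.mul ℝ ℝ).holderL P 2 2 1 (Lp.const 2 P 1)

theorem MeasureTheory.L2.coeFn_toL1 {P : Measure Ω} [IsFiniteMeasure P] (Z : Lp ℝ 2 P) :
    L2.toL1 P Z =ᵐ[P] Z := by
  filter_upwards [(ContinuousLinearMap.mul ℝ ℝ).coeFn_holder (r := 1) (Lp.const 2 P 1) Z,
    Lp.coeFn_const (p := 2) (μ := P) (c := (1 : ℝ))] with ω h h1
  rw [L2.toL1, ContinuousLinearMap.holderL_apply_apply, h, h1]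
  simp

theorem MeasureTheory.L2.toL1_indicatorConstLp {P : Measure Ω} [IsFiniteMeasure P] {s : Set Ω}
    (hs : MeasurableSet s) (c : ℝ) :
    L2.toL1 P (indicatorConstLp 2 hs (measure_ne_top P s) c) =
      indicatorConstLp 1 hs (measure_ne_top P s) c := by
  apply Lp.ext
  filter_upwards [L2.coeFn_toL1 (indicatorConstLp 2 hs (measure_ne_top P s) c),
    indicatorConstLp_coeFn (p := 2) (hs := hs) (hμs := measure_ne_top P s) (c := c),
    indicatorConstLp_coeFn (p := 1) (hs := hs) (hμs := measure_ne_top P s) (c := c)]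
    with ω h h2 h1
  rw [h, h2, h1]

/-- `(L¹)* = L∞`: the Riesz representative `H ∈ L²` of `φ` restricted to `L² ⊆ L¹` satisfies
`∫_s H = φ 1_s`, hence `|H| ≤ ‖φ‖`, and simple functions are dense in `L¹`. -/
theorem exists_linftyPairing_eq {P : Measure Ω} [IsFiniteMeasure P] (φ : Lp ℝ 1 P →L[ℝ] ℝ) :
    ∃ W : Lp ℝ ⊤ P, ‖W‖ ≤ ‖φ‖ ∧ linftyPairing P W = φ := by
  set H : Lp ℝ 2 P := (InnerProductSpace.toDual ℝ (Lp ℝ 2 P)).symm (φ.comp (L2.toL1 P))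
  have hH : Integrable H P := (Lp.memLp H).integrable one_le_two
  have hset : ∀ (c : ℝ) {s : Set Ω} (hs : MeasurableSet s),
      ∫ ω in s, c * H ω ∂P = φ (indicatorConstLp 1 hs (measure_ne_top P s) c) := by
    intro c s hs
    rw [← L2.toL1_indicatorConstLp, ← φ.comp_apply, ← InnerProductSpace.toDual_symm_apply,
      real_inner_comm, L2.inner_indicatorConstLp_eq_setIntegral_inner]
    simp [H, mul_comm]
  have hle : ∀ s, MeasurableSet s → |∫ ω in s, H ω ∂P| ≤ ∫ ω in s, ‖φ‖ ∂P := by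
    intro s hs
    have := φ.le_opNorm (indicatorConstLp 1 hs (measure_ne_top P s) 1)
    rw [← hset 1 hs, norm_indicatorConstLp one_ne_zero ENNReal.one_ne_top] at this
    simpa [mul_comm] using this
  have hup : (H : Ω → ℝ) ≤ᵐ[P] fun _ => ‖φ‖ :=
    ae_le_of_forall_setIntegral_le hH (integrable_const _) fun s hs _ =>
      (le_abs_self _).trans (hle s hs)
  have hlo : (fun ω => -H ω) ≤ᵐ[P] fun _ => ‖φ‖ :=
    ae_le_of_forall_setIntegral_le hH.neg (integrable_const _) fun s hs _ => by
      rw [integral_neg]; exact (neg_le_abs _).trans (hle s hs)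
  have hbound : ∀ᵐ ω ∂P, ‖H ω‖ ≤ ‖φ‖ := by
    filter_upwards [hup, hlo] with ω h1 h2
    exact abs_le.2 ⟨by linarith, h1⟩
  set W := (memLp_top_of_bound (Lp.aestronglyMeasurable H) _ hbound).toLp H
  have hWH : W =ᵐ[P] H := MemLp.coeFn_toLp _
  refine ⟨W, ?_, ?_⟩
  · have := Lp.norm_le_of_ae_bound (norm_nonneg φ) (p := ⊤) (f := W)
      (by filter_upwards [hWH, hbound] with ω h h' using h ▸ h')
    simpa using this
  ext1 Y
  induction Y using Lp.induction ENNReal.one_ne_top with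
  | @indicatorConst c s hs hμs =>
    rw [Lp.simpleFunc.coe_indicatorConst, ← hset c hs, linftyPairing_apply,
      ← integral_indicator hs]
    refine integral_congr_ae ?_
    filter_upwards [hWH, indicatorConstLp_coeFn (p := 1) (hs := hs) (hμs := hμs.ne) (c := c)]
      with ω h h1
    by_cases hω : ω ∈ s <;> simp [h, h1, hω, mul_comm]
  | add _ _ _ hf hg => rw [map_add, map_add, hf, hg]
  | isClosed => exact isClosed_eq (linftyPairing P W).continuous φ.continuous

theorem exists_clm_coeFn_eq_linftyPairing {A : Type*} [MeasurableSpace A] {μ : Measure A}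
    {P : Measure Ω} {Ua : A → Lp ℝ ⊤ P}
    (hU : ∀ Y, Integrable (fun a => linftyPairing P (Ua a) Y) μ) :
    ∃ T : Lp ℝ 1 P →L[ℝ] Lp ℝ 1 μ, ∀ Y, T Y =ᵐ[μ] fun a => linftyPairing P (Ua a) Y := by
  let T₀ : Lp ℝ 1 P →ₗ[ℝ] Lp ℝ 1 μ :=
    { toFun := fun Y => (hU Y).toL1 _
      map_add' := fun Y Z => by
        rw [← Integrable.toL1_add]
        exact (Integrable.toL1_eq_toL1_iff _ _ _ _).2 (ae_of_all _ fun a => map_add _ _ _)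
      map_smul' := fun c Y => by
        rw [RingHom.id_apply, ← Integrable.toL1_smul]
        exact (Integrable.toL1_eq_toL1_iff _ _ _ _).2 (ae_of_all _ fun a => map_smul _ _ _) }
  refine ⟨ContinuousLinearMap.ofSeqClosedGraph (g := T₀) fun u x y hux huy => ?_,
    fun Y => (hU Y).coeFn_toL1⟩
  obtain ⟨ns, hns, hae⟩ := (tendstoInMeasure_of_tendsto_Lp huy).exists_seq_tendsto_ae
  refine Lp.ext (EventuallyEq.trans ?_ (hU x).coeFn_toL1.symm)
  filter_upwards [hae, ae_all_iff.2 fun k => (hU (u (ns k))).coeFn_toL1] with a ha hk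
  refine tendsto_nhds_unique ha (Tendsto.congr (fun k => (hk k).symm) ?_)
  exact ((linftyPairing P (Ua a)).continuous.tendsto x).comp (hux.comp hns.tendsto_atTop)

theorem exists_linftyPairing_eq_setIntegral {A : Type*} [MeasurableSpace A] {μ : Measure A}
    {P : Measure Ω} [IsFiniteMeasure P] {Ua : A → Lp ℝ ⊤ P}
    (hU : ∀ Y, Integrable (fun a => linftyPairing P (Ua a) Y) μ) :
    ∃ C, ∀ s : Set A, ∃ W : Lp ℝ ⊤ P, ‖W‖ ≤ C ∧
      ∀ Y, linftyPairing P W Y = ∫ a in s, linftyPairing P (Ua a) Y ∂μ := by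
  obtain ⟨T, hT⟩ := exists_clm_coeFn_eq_linftyPairing hU
  refine ⟨‖T‖, fun s => ?_⟩
  set φ : Lp ℝ 1 P →L[ℝ] ℝ :=
    (L1.integralCLM (μ := μ.restrict s)).comp ((LpToLpRestrictCLM A ℝ ℝ μ 1 s).comp T)
  have hφ : ∀ Y, φ Y = ∫ a in s, linftyPairing P (Ua a) Y ∂μ := fun Y => by
    simp only [φ, ContinuousLinearMap.comp_apply]
    rw [← L1.integral_eq, L1.integral_eq_integral]
    exact integral_congr_ae ((LpToLpRestrictCLM_coeFn ℝ s (T Y)).trans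
      (ae_restrict_of_ae (hT Y)))
  have hφT : ‖φ‖ ≤ ‖T‖ := by
    refine φ.opNorm_le_bound (norm_nonneg T) fun Y => ?_
    calc ‖φ Y‖ ≤ ‖T Y‖ := by
          simp only [φ, ContinuousLinearMap.comp_apply]
          rw [← L1.integral_eq]
          exact (L1.norm_integral_le _).trans (norm_Lp_toLp_restrict_le s (T Y))
      _ ≤ ‖T‖ * ‖Y‖ := T.le_opNorm Y
  obtain ⟨W, hW, hWφ⟩ := exists_linftyPairing_eq φ
  exact ⟨W, hW.trans hφT, fun Y => by rw [hWφ, hφ]⟩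

end Pairing

section RiskMeasure

variable {Ω : Type*} [MeasurableSpace Ω]

theorem MeasureTheory.Lp.ae_norm_le_norm_top_s16 {P : Measure Ω} (f : Lp ℝ ⊤ P) :
    ∀ᵐ ω ∂P, ‖f ω‖ ≤ ‖f‖ := by
  filter_upwards [ae_le_eLpNormEssSup (μ := P) (f := (f : Ω → ℝ))] with ω hω
  have hf : eLpNormEssSup (f : Ω → ℝ) P ≠ ⊤ := by
    simpa [eLpNorm_exponent_top] using Lp.eLpNorm_ne_top f
  rw [Lp.norm_def, eLpNorm_exponent_top, ← toReal_enorm]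
  exact ENNReal.toReal_mono hf hω

theorem MeasureTheory.Lp.le_const_norm_top {P : Measure Ω} [IsFiniteMeasure P] (f : Lp ℝ ⊤ P) :
    f ≤ Lp.const ⊤ P ‖f‖ := by
  rw [← Lp.coeFn_le]
  filter_upwards [Lp.ae_norm_le_norm_top_s16 f, Lp.coeFn_const (p := ⊤) (μ := P) (c := ‖f‖)]
    with ω hω hc
  rw [hc]
  exact (le_abs_self _).trans hω

theorem abs_sub_le_norm_of_monotone_of_cash {P : Measure Ω} [IsFiniteMeasure P]
    {ρ : Lp ℝ ⊤ P → ℝ} (hmono : ∀ X Y : Lp ℝ ⊤ P, Y ≤ X → ρ Y ≤ ρ X)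
    (hcash : ∀ (X : Lp ℝ ⊤ P) (c : ℝ), ρ (X + Lp.const ⊤ P c) = ρ X + c) (U V : Lp ℝ ⊤ P) :
    |ρ (U + V) - ρ U| ≤ ‖V‖ := by
  have hV : ρ (U + V) ≤ ρ U + ‖V‖ :=
    (hmono _ _ (add_le_add_right (Lp.le_const_norm_top V) U)).trans_eq (hcash U ‖V‖)
  have hnegV : ρ U ≤ ρ (U + V) + ‖V‖ := by
    simpa [norm_neg] using
      (hmono _ _ (add_le_add_right (Lp.le_const_norm_top (-V)) (U + V))).trans_eq
        (hcash (U + V) ‖-V‖)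
  rw [abs_sub_le_iff]
  constructor <;> linarith

variable {A : Type*} {P : Measure Ω} [IsFiniteMeasure P] {ρ : A → Lp ℝ ⊤ P → ℝ}
  {Xa Ya : A → Lp ℝ ⊤ P} {s : Set A} [DecidablePred (· ∈ s)]

theorem abs_sub_piecewise_le_indicator
    (hmono : ∀ a, ∀ X Y : Lp ℝ ⊤ P, Y ≤ X → ρ a Y ≤ ρ a X)
    (hcash : ∀ a, ∀ (X : Lp ℝ ⊤ P) (c : ℝ), ρ a (X + Lp.const ⊤ P c) = ρ a X + c)
    (W : Lp ℝ ⊤ P) (a : A) :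
    |ρ a (s.piecewise (fun a => Ya a + W) Xa a) -
        s.piecewise (fun a => ρ a (Ya a)) (fun a => ρ a (Xa a)) a| ≤
      s.indicator (fun _ => ‖W‖) a := by
  by_cases ha : a ∈ s
  · simp only [Set.piecewise_eq_of_mem _ _ _ ha, Set.indicator_of_mem ha]
    exact abs_sub_le_norm_of_monotone_of_cash (hmono a) (hcash a) _ _
  · simp [ha]

variable [MeasurableSpace A] {μ : Measure A} [IsFiniteMeasure μ]

theorem integrable_risk_piecewise
    (hmono : ∀ a, ∀ X Y : Lp ℝ ⊤ P, Y ≤ X → ρ a Y ≤ ρ a X)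
    (hcash : ∀ a, ∀ (X : Lp ℝ ⊤ P) (c : ℝ), ρ a (X + Lp.const ⊤ P c) = ρ a X + c)
    (hs : MeasurableSet s) {W : Lp ℝ ⊤ P}
    (hZ : AEMeasurable (fun a => ρ a (s.piecewise (fun a => Ya a + W) Xa a)) μ)
    (hR : Integrable (s.piecewise (fun a => ρ a (Ya a)) fun a => ρ a (Xa a)) μ) :
    Integrable (fun a => ρ a (s.piecewise (fun a => Ya a + W) Xa a)) μ := by
  have hdev : Integrable (fun a => ρ a (s.piecewise (fun a => Ya a + W) Xa a) -
      s.piecewise (fun a => ρ a (Ya a)) (fun a => ρ a (Xa a)) a) μ :=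
    ((integrable_const ‖W‖).indicator hs).mono' (hZ.sub hR.aemeasurable).aestronglyMeasurable
      (ae_of_all _ fun a => (Real.norm_eq_abs _).trans_le
        (abs_sub_piecewise_le_indicator hmono hcash W a))
  exact (hdev.add hR).congr (ae_of_all _ fun a => sub_add_cancel _ _)

theorem integral_risk_piecewise_le
    (hmono : ∀ a, ∀ X Y : Lp ℝ ⊤ P, Y ≤ X → ρ a Y ≤ ρ a X)
    (hcash : ∀ a, ∀ (X : Lp ℝ ⊤ P) (c : ℝ), ρ a (X + Lp.const ⊤ P c) = ρ a X + c)
    (hs : MeasurableSet s) {W : Lp ℝ ⊤ P}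
    (hZ : AEMeasurable (fun a => ρ a (s.piecewise (fun a => Ya a + W) Xa a)) μ)
    (hR : Integrable (s.piecewise (fun a => ρ a (Ya a)) fun a => ρ a (Xa a)) μ) :
    ∫ a, ρ a (s.piecewise (fun a => Ya a + W) Xa a) ∂μ ≤
      ∫ a, s.piecewise (fun a => ρ a (Ya a)) (fun a => ρ a (Xa a)) a ∂μ + μ.real s * ‖W‖ := by
  have hind : Integrable (s.indicator fun _ => ‖W‖) μ := (integrable_const _).indicator hs
  have hdev (a : A) := (abs_le.1 (abs_sub_piecewise_le_indicator (s := s) (Xa := Xa) (Ya := Ya)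
    hmono hcash W a)).2
  calc _ ≤ ∫ a, (s.piecewise (fun a => ρ a (Ya a)) (fun a => ρ a (Xa a)) a +
          s.indicator (fun _ => ‖W‖) a) ∂μ :=
        integral_mono (integrable_risk_piecewise hmono hcash hs hZ hR) (hR.add hind) fun a => by
          linarith [hdev a]
    _ = _ := by rw [integral_add hR hind, integral_indicator_const _ hs, smul_eq_mul]

end RiskMeasure

theorem integrableOn_setOf_le {A : Type*} [MeasurableSpace A] {μ : Measure A} [IsFiniteMeasure μ]
    {f : A → ℝ} (hf : Measurable f) (hf0 : 0 ≤ᵐ[μ] f) (N : ℝ) :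
    IntegrableOn f {a | f a ≤ N} μ := by
  refine Integrable.of_bound hf.aestronglyMeasurable N ?_
  filter_upwards [ae_restrict_mem (measurableSet_le hf measurable_const),
    ae_restrict_of_ae hf0] with a ha h0
  rw [Real.norm_of_nonneg h0]
  exact ha

theorem exists_lt_setIntegral_setOf_le {A : Type*} [MeasurableSpace A] {μ : Measure A}
    [IsFiniteMeasure μ] {f : A → ℝ} (hf : Measurable f) (hf0 : 0 ≤ᵐ[μ] f)
    (hfi : ¬Integrable f μ) (M : ℝ) : ∃ N : ℝ, M < ∫ a in {a | f a ≤ N}, f a ∂μ := by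
  by_contra! h
  refine hfi ⟨hf.aestronglyMeasurable, ?_⟩
  have hunion : (⋃ N : ℕ, {a | f a ≤ N}) = Set.univ :=
    Set.eq_univ_of_forall fun a => Set.mem_iUnion.2 (exists_nat_ge (f a))
  have hmonoN : Monotone fun N : ℕ => {a | f a ≤ N} := fun m n hmn a (ha : f a ≤ m) =>
    ha.trans (Nat.cast_le.2 hmn)
  calc ∫⁻ a, ‖f a‖ₑ ∂μ = ∫⁻ a in ⋃ N : ℕ, {a | f a ≤ N}, ‖f a‖ₑ ∂μ := by
        rw [hunion, Measure.restrict_univ]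
    _ = ⨆ N : ℕ, ∫⁻ a in {a | f a ≤ N}, ‖f a‖ₑ ∂μ :=
        setLIntegral_iUnion_of_directed _ hmonoN.directed_le
    _ ≤ ENNReal.ofReal M := iSup_le fun N => by
        rw [← ofReal_integral_norm_eq_lintegral_enorm (integrableOn_setOf_le hf hf0 N)]
        refine ENNReal.ofReal_le_ofReal ((integral_congr_ae ?_).trans_le (h N))
        filter_upwards [ae_restrict_of_ae hf0] with a ha using Real.norm_of_nonneg ha
    _ < ⊤ := ENNReal.ofReal_lt_top

theorem integral_lt_integral_of_ae_le_of_measure_setOf_lt_ne_zero {A : Type*}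
    [MeasurableSpace A] {μ : Measure A} {f g : A → ℝ} (hf : Integrable f μ) (hg : Integrable g μ)
    (hfg : f ≤ᵐ[μ] g) (hlt : μ {a | f a < g a} ≠ 0) : ∫ a, f a ∂μ < ∫ a, g a ∂μ := by
  refine (integral_mono_ae hf hg hfg).lt_of_ne fun heq => hlt ?_
  exact measure_mono_null (fun a ha => ne_of_lt ha) ((integral_eq_iff_of_ae_le hf hg hfg).1 heq)

section Feasible

variable {A Ω : Type*} [MeasurableSpace A] [MeasurableSpace Ω] {μ : Measure A} {P : Measure Ω}
  [IsProbabilityMeasure P] {X : Lp ℝ ⊤ P} {Xa Ya : A → Lp ℝ ⊤ P}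

theorem feasible_iff :
    Feasible μ P X Xa ↔ (∀ Y, Integrable (fun a => linftyPairing P (Xa a) Y) μ) ∧
      ∀ Y, ∫ a, linftyPairing P (Xa a) Y ∂μ = linftyPairing P X Y := by
  simp only [Feasible, linftyPairing_apply]

theorem Feasible.add_const (hX : Feasible μ P X Xa) {c : A → ℝ} (hc : Integrable c μ)
    (hc0 : ∫ a, c a ∂μ = 0) : Feasible μ P X fun a => Xa a + Lp.const ⊤ P (c a) := by
  rw [feasible_iff] at hX ⊢
  simp only [map_add, add_apply, linftyPairing_const]
  refine ⟨fun Y => (hX.1 Y).add (hc.mul_const _), fun Y => ?_⟩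
  rw [integral_add (hX.1 Y) (hc.mul_const _), integral_mul_const, hc0, zero_mul, add_zero, hX.2 Y]

theorem Feasible.piecewise [IsFiniteMeasure μ] (hX : Feasible μ P X Xa)
    (hY : Feasible μ P X Ya) {s : Set A} [DecidablePred (· ∈ s)] (hs : MeasurableSet s)
    {W : Lp ℝ ⊤ P}
    (hW : ∀ Y, μ.real s * linftyPairing P W Y =
      ∫ a in sᶜ, (linftyPairing P (Ya a) Y - linftyPairing P (Xa a) Y) ∂μ) :
    Feasible μ P X (s.piecewise (fun a => Ya a + W) Xa) := by
  rw [feasible_iff] at hX hY ⊢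
  have hpw : ∀ Y, (fun a => linftyPairing P (s.piecewise (fun a => Ya a + W) Xa a) Y) =
      s.piecewise (fun a => linftyPairing P (Ya a) Y + linftyPairing P W Y)
        (fun a => linftyPairing P (Xa a) Y) := fun Y => by
    ext a; by_cases ha : a ∈ s <;> simp [ha]
  have hint : ∀ Y, IntegrableOn (fun a => linftyPairing P (Ya a) Y + linftyPairing P W Y) s μ :=
    fun Y => ((hY.1 Y).add (integrable_const _)).integrableOn
  refine ⟨fun Y => hpw Y ▸ Integrable.piecewise hs (hint Y) (hX.1 Y).integrableOn, fun Y => ?_⟩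
  rw [hpw, integral_piecewise hs (hint Y) (hX.1 Y).integrableOn,
    integral_add (hY.1 Y).integrableOn (integrable_const _), setIntegral_const, smul_eq_mul,
    hW, integral_sub (hY.1 Y).integrableOn (hX.1 Y).integrableOn, ← hY.2 Y,
    ← integral_add_compl hs (hY.1 Y)]
  ring

theorem Feasible.exists_piecewise [IsFiniteMeasure μ] (hX : Feasible μ P X Xa)
    (hY : Feasible μ P X Ya) :
    ∃ C, ∀ (s : Set A) [DecidablePred (· ∈ s)], MeasurableSet s → μ.real s ≠ 0 →
      ∃ W : Lp ℝ ⊤ P, μ.real s * ‖W‖ ≤ C ∧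
        Feasible μ P X (s.piecewise (fun a => Ya a + W) Xa) := by
  obtain ⟨C, hC⟩ := exists_linftyPairing_eq_setIntegral (μ := μ) (Ua := fun a => Ya a - Xa a)
    fun Y => by
      simpa only [map_sub, sub_apply, Pi.sub_def] using
        ((feasible_iff.1 hY).1 Y).sub ((feasible_iff.1 hX).1 Y)
  refine ⟨C, fun s _ hs hμs => ?_⟩
  obtain ⟨V, hVC, hV⟩ := hC sᶜ
  refine ⟨(μ.real s)⁻¹ • V, ?_, hX.piecewise hY hs fun Y => ?_⟩
  · rwa [norm_smul, Real.norm_of_nonneg (inv_nonneg.2 measureReal_nonneg),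
      mul_inv_cancel_left₀ hμs]
  · simp only [map_smul, smul_apply, smul_eq_mul, mul_inv_cancel_left₀ hμs, hV, map_sub,
      sub_apply]

end Feasible

section Allocation

variable {A Ω : Type*} [MeasurableSpace A] [MeasurableSpace Ω] {μ : Measure A} {P : Measure Ω}
  [IsProbabilityMeasure P] {ρ : A → Lp ℝ ⊤ P → ℝ} {X : Lp ℝ ⊤ P} {Xa Ya : A → Lp ℝ ⊤ P}

variable (μ P ρ X) in
/-- `sInf (totalRisks μ P ρ X)` is the integral infimal convolution `φ(X)`. -/
def totalRisks : Set ℝ :=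
  {r | ∃ Ya : A → Lp ℝ ⊤ P, Feasible μ P X Ya ∧
    Integrable (fun a => ρ a (Ya a)) μ ∧ r = ∫ a, ρ a (Ya a) ∂μ}

theorem Feasible.exists_forall_risk_lt [IsFiniteMeasure μ] (hμ : μ Set.univ ≠ 0)
    (hcash : ∀ a, ∀ (X : Lp ℝ ⊤ P) (c : ℝ), ρ a (X + Lp.const ⊤ P c) = ρ a X + c)
    (hY : Feasible μ P X Ya) (hXint : Integrable (fun a => ρ a (Xa a)) μ)
    (hYint : Integrable (fun a => ρ a (Ya a)) μ)
    (hlt : ∫ a, ρ a (Ya a) ∂μ < ∫ a, ρ a (Xa a) ∂μ) :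
    ∃ Za, Feasible μ P X Za ∧ ∀ a, ρ a (Za a) < ρ a (Xa a) := by
  set R := (∫ a, ρ a (Xa a) ∂μ - ∫ a, ρ a (Ya a) ∂μ) / μ.real Set.univ
  have hμA : 0 < μ.real Set.univ := ENNReal.toReal_pos hμ (measure_ne_top μ _)
  have hR : 0 < R := div_pos (sub_pos.2 hlt) hμA
  set c : A → ℝ := fun a => ρ a (Xa a) - ρ a (Ya a) - R
  have hc : Integrable c μ := (hXint.sub hYint).sub (integrable_const R)
  have hc0 : ∫ a, c a ∂μ = 0 := by
    rw [integral_sub (f := fun a => ρ a (Xa a) - ρ a (Ya a)) (hXint.sub hYint)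
      (integrable_const R), integral_sub hXint hYint, integral_const, smul_eq_mul]
    simp only [R, mul_div_cancel₀ _ hμA.ne', sub_self]
  refine ⟨fun a => Ya a + Lp.const ⊤ P (c a), hY.add_const hc hc0, fun a => ?_⟩
  rw [hcash]
  linarith

theorem not_bddBelow_totalRisks_of_not_integrable [IsFiniteMeasure μ]
    (hmono : ∀ a, ∀ X Y : Lp ℝ ⊤ P, Y ≤ X → ρ a Y ≤ ρ a X)
    (hcash : ∀ a, ∀ (X : Lp ℝ ⊤ P) (c : ℝ), ρ a (X + Lp.const ⊤ P c) = ρ a X + c)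
    (hmeas : ∀ Xa : A → Lp ℝ ⊤ P,
      (∀ Y : Lp ℝ 1 P, AEMeasurable (fun a => ∫ ω, Xa a ω * Y ω ∂P) μ) →
      AEMeasurable (fun a => ρ a (Xa a)) μ)
    (hX : Feasible μ P X Xa) (hXint : Integrable (fun a => ρ a (Xa a)) μ)
    (hY : Feasible μ P X Ya) (hle : ∀ᵐ a ∂μ, ρ a (Ya a) ≤ ρ a (Xa a))
    (hYint : ¬Integrable (fun a => ρ a (Ya a)) μ) : ¬BddBelow (totalRisks μ P ρ X) := by
  classical
  rintro ⟨b, hb⟩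
  have hmeas' : ∀ {Za}, Feasible μ P X Za → AEMeasurable (fun a => ρ a (Za a)) μ :=
    fun hZ => hmeas _ fun Y => (hZ.1 Y).aemeasurable
  obtain ⟨g, hg, hgg⟩ := (hmeas' hX).sub (hmeas' hY)
  have hYg : (fun a => ρ a (Ya a)) =ᵐ[μ] fun a => ρ a (Xa a) - g a := by
    filter_upwards [hgg] with a ha
    rw [← ha, Pi.sub_apply, sub_sub_cancel]
  have hg0 : 0 ≤ᵐ[μ] g := by
    filter_upwards [hgg, hle] with a ha hlea
    rw [Pi.zero_apply, ← ha, Pi.sub_apply, sub_nonneg]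
    exact hlea
  have hgi : ¬Integrable g μ := fun h => hYint ((hXint.sub h).congr hYg.symm)
  obtain ⟨C, hC⟩ := hX.exists_piecewise hY
  -- the `0` makes `∫_s g > 0`, hence `μ s ≠ 0`
  obtain ⟨N, hN⟩ := exists_lt_setIntegral_setOf_le hg hg0 hgi
    (max (∫ a, ρ a (Xa a) ∂μ + C - b) 0)
  set s := {a | g a ≤ N}
  have hs : MeasurableSet s := measurableSet_le hg measurable_const
  have hμs : μ.real s ≠ 0 := fun h0 => by
    rw [setIntegral_measure_zero _ ((measureReal_eq_zero_iff (measure_ne_top μ s)).1 h0)] at hN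
    exact (le_max_right _ _).not_gt hN
  obtain ⟨W, hWC, hZ⟩ := hC s hs hμs
  set R := s.piecewise (fun a => ρ a (Ya a)) fun a => ρ a (Xa a)
  have hgs : IntegrableOn g s μ := integrableOn_setOf_le hg hg0 N
  have hR : R =ᵐ[μ] fun a => ρ a (Xa a) - s.indicator g a := by
    filter_upwards [hYg] with a ha
    by_cases has : a ∈ s
    · simpa [R, has] using ha
    · simp [R, has]
  have hRint : Integrable R μ := (hXint.sub (hgs.integrable_indicator hs)).congr hR.symm
  have hRval : ∫ a, R a ∂μ = ∫ a, ρ a (Xa a) ∂μ - ∫ a in s, g a ∂μ := by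
    rw [integral_congr_ae hR, integral_sub hXint (hgs.integrable_indicator hs),
      integral_indicator hs]
  have hZb := hb ⟨_, hZ, integrable_risk_piecewise hmono hcash hs (hmeas' hZ) hRint, rfl⟩
  have hZR := integral_risk_piecewise_le hmono hcash hs (hmeas' hZ) hRint
  linarith [le_max_left (∫ a, ρ a (Xa a) ∂μ + C - b) 0]

end Allocation

theorem pareto_iff_optimal_general
    {A Ω : Type*} [MeasurableSpace A] [MeasurableSpace Ω]
    (μ : Measure A) [IsFiniteMeasure μ] (hμ : μ Set.univ ≠ 0)
    (P : Measure Ω) [IsProbabilityMeasure P]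
    (ρ : A → Lp ℝ ⊤ P → ℝ)
    (hmono : ∀ a, ∀ X Y : Lp ℝ ⊤ P, Y ≤ X → ρ a Y ≤ ρ a X)
    (hcash : ∀ a, ∀ (X : Lp ℝ ⊤ P) (c : ℝ), ρ a (X + Lp.const ⊤ P c) = ρ a X + c)
    -- measurable family of risk measures
    (hmeas : ∀ Xa : A → Lp ℝ ⊤ P,
      (∀ Y : Lp ℝ 1 P, AEMeasurable (fun a => ∫ ω, Xa a ω * Y ω ∂P) μ) →
      AEMeasurable (fun a => ρ a (Xa a)) μ)
    -- the integral infimal convolution is finite-valued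
    (hfin : ∀ X : Lp ℝ ⊤ P,
      {r : ℝ | ∃ Xa : A → Lp ℝ ⊤ P, Feasible μ P X Xa ∧
        Integrable (fun a => ρ a (Xa a)) μ ∧ r = ∫ a, ρ a (Xa a) ∂μ}.Nonempty ∧
      BddBelow {r : ℝ | ∃ Xa : A → Lp ℝ ⊤ P, Feasible μ P X Xa ∧
        Integrable (fun a => ρ a (Xa a)) μ ∧ r = ∫ a, ρ a (Xa a) ∂μ})
    (X : Lp ℝ ⊤ P) (Xa : A → Lp ℝ ⊤ P)
    (hXa : Feasible μ P X Xa) (hXaint : Integrable (fun a => ρ a (Xa a)) μ) :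
    ParetoEfficient μ P ρ X Xa ↔
      (∫ a, ρ a (Xa a) ∂μ) =
        sInf {r : ℝ | ∃ Ya : A → Lp ℝ ⊤ P, Feasible μ P X Ya ∧
          Integrable (fun a => ρ a (Ya a)) μ ∧ r = ∫ a, ρ a (Ya a) ∂μ} := by
  obtain ⟨hne, hbdd⟩ : (totalRisks μ P ρ X).Nonempty ∧ BddBelow (totalRisks μ P ρ X) := hfin X
  change _ ↔ _ = sInf (totalRisks μ P ρ X)
  constructor
  · rintro ⟨-, hpareto⟩
    refine le_antisymm (le_csInf hne ?_) (csInf_le hbdd ⟨Xa, hXa, hXaint, rfl⟩)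
    rintro _ ⟨Ya, hYa, hYaint, rfl⟩
    by_contra! hlt
    obtain ⟨Za, hZa, hZlt⟩ := hYa.exists_forall_risk_lt hμ hcash hXaint hYaint hlt
    refine hpareto ⟨Za, hZa, ae_of_all _ fun a => (hZlt a).le, ?_⟩
    simpa only [hZlt, Set.ofPred_true] using hμ
  · intro hopt
    refine ⟨hXa, fun ⟨Ya, hYa, hle, hlt⟩ => ?_⟩
    by_cases hYaint : Integrable (fun a => ρ a (Ya a)) μ
    · have := integral_lt_integral_of_ae_le_of_measure_setOf_lt_ne_zero hYaint hXaint hle hlt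
      linarith [csInf_le hbdd ⟨Ya, hYa, hYaint, rfl⟩]
    · exact not_bddBelow_totalRisks_of_not_integrable hmono hcash hmeas hXa hXaint hYa hle
        hYaint hbdd

/-- If the integral infimal convolution `φ` is finite-valued, an `X`-feasible
allocation `(X_a)` is Pareto efficient if and only if `∫_A ρ_a(X_a) dμ = φ(X)`. -/
theorem pareto_iff_optimal
    {A Ω : Type*} [MeasurableSpace A] [MeasurableSpace Ω]
    (μ : Measure A) [IsFiniteMeasure μ] (hμ : μ Set.univ ≠ 0)
    (P : Measure Ω) [IsProbabilityMeasure P]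
    (ρ : A → Lp ℝ ⊤ P → ℝ)
    (hmono : ∀ a, ∀ X Y : Lp ℝ ⊤ P, Y ≤ X → ρ a Y ≤ ρ a X)
    (hcash : ∀ a, ∀ (X : Lp ℝ ⊤ P) (c : ℝ), ρ a (X + Lp.const ⊤ P c) = ρ a X + c)
    (hconv : ∀ a, ∀ (X Y : Lp ℝ ⊤ P) (l : ℝ), 0 ≤ l → l ≤ 1 →
      ρ a (l • X + (1 - l) • Y) ≤ l * ρ a X + (1 - l) * ρ a Y)
    -- measurable family of risk measures
    (hmeas : ∀ Xa : A → Lp ℝ ⊤ P,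
      (∀ Y : Lp ℝ 1 P, AEMeasurable (fun a => ∫ ω, Xa a ω * Y ω ∂P) μ) →
      AEMeasurable (fun a => ρ a (Xa a)) μ)
    -- the integral infimal convolution is finite-valued
    (hfin : ∀ X : Lp ℝ ⊤ P,
      {r : ℝ | ∃ Xa : A → Lp ℝ ⊤ P, Feasible μ P X Xa ∧
        Integrable (fun a => ρ a (Xa a)) μ ∧ r = ∫ a, ρ a (Xa a) ∂μ}.Nonempty ∧
      BddBelow {r : ℝ | ∃ Xa : A → Lp ℝ ⊤ P, Feasible μ P X Xa ∧
        Integrable (fun a => ρ a (Xa a)) μ ∧ r = ∫ a, ρ a (Xa a) ∂μ})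
    (X : Lp ℝ ⊤ P) (Xa : A → Lp ℝ ⊤ P)
    (hXa : Feasible μ P X Xa) (hXaint : Integrable (fun a => ρ a (Xa a)) μ) :
    ParetoEfficient μ P ρ X Xa ↔
      (∫ a, ρ a (Xa a) ∂μ) =
        sInf {r : ℝ | ∃ Ya : A → Lp ℝ ⊤ P, Feasible μ P X Ya ∧
          Integrable (fun a => ρ a (Ya a)) μ ∧ r = ∫ a, ρ a (Ya a) ∂μ} :=
  pareto_iff_optimal_general μ hμ P ρ hmono hcash hmeas hfin X Xa hXa hXaint
end

section
/- Let ρ be a coherent risk measure with the Lebesgue property and dual representation ρ(X) = sup_{Q ∈ Q(ρ)} E^Q[X]. Fix X ∈ L∞(P). If 1 ≤ γ < γ' ≤ γ'' and ρ̃_γ(X) = ρ̃_{γ'}(X), then ρ̃_{γ''}(X) = ρ̃_γ(X) = esssup X, where ρ̃_γ denotes the γ-inflation of ρ. -/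
/-! Suppose `Q` is admissible at level `γ`, i.e. `dQ/dP ≤ γ dQ₁/dP` with `Q₁ ∈ 𝒬`, and let `A` be
an event. Adding the mass `(γ' - γ) P|_A` to `Q` and renormalising gives a measure admissible at
level `γ'`: the mixture `(γ/γ') Q₁ + (1 - γ/γ') P` lies in `𝒬`, and `γ'` times it dominates
`Q + (γ' - γ) P`. Taking suprema,
`ρ̃_γ(X) + (γ' - γ) E[X; A] ≤ (1 + (γ' - γ) P(A)) ρ̃_{γ'}(X)`.
If the two inflations have the same value `c`, this says `E[X; A] ≤ c P(A)` for every event `A`,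
so `X ≤ c` almost surely. The remaining inequalities hold because `ρ̃_γ` is monotone in `γ`
and bounded by `esssup X`. -/

open MeasureTheory Filter
open scoped ENNReal

section

variable {Ω : Type*} [MeasurableSpace Ω]

namespace MeasureTheory.MemLp

variable {μ ν : Measure Ω} {f : Ω → ℝ}

lemma exists_ae_abs_le (hf : MemLp f ∞ μ) : ∃ C, ∀ᵐ x ∂μ, |f x| ≤ C := by
  refine ⟨(eLpNormEssSup f μ).toReal, ?_⟩
  filter_upwards [ae_le_eLpNormEssSup (f := f) (μ := μ)] with x hx
  rw [Real.enorm_eq_ofReal_abs] at hx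
  exact (ENNReal.ofReal_le_iff_le_toReal (by simpa [eLpNorm_exponent_top] using hf.2.ne)).1 hx

lemma ae_le_essSup (hf : MemLp f ∞ μ) : ∀ᵐ x ∂μ, f x ≤ essSup f μ := by
  obtain ⟨C, hC⟩ := hf.exists_ae_abs_le
  exact _root_.ae_le_essSup (isBoundedUnder_of_eventually_le (hC.mono fun x hx => le_of_abs_le hx))

lemma essSup_le_of_ae_le [NeZero μ] (hf : MemLp f ∞ μ) {c : ℝ} (h : f ≤ᵐ[μ] fun _ => c) :
    essSup f μ ≤ c := by
  obtain ⟨C, hC⟩ := hf.exists_ae_abs_le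
  exact _root_.essSup_le_of_ae_le c h <| IsBoundedUnder.isCoboundedUnder_le
    ⟨-C, eventually_map.2 (hC.mono fun x hx => neg_le_of_abs_le hx)⟩

lemma integrable_of_absolutelyContinuous_s18 [IsFiniteMeasure ν] (hf : MemLp f ∞ μ) (hνμ : ν ≪ μ) :
    Integrable f ν :=
  MemLp.integrable le_top ⟨hf.1.mono_ac hνμ, by
    simpa [eLpNorm_exponent_top] using (eLpNormEssSup_mono_measure f hνμ).trans_lt hf.2⟩

end MeasureTheory.MemLp

namespace MeasureTheory.Measure

lemma le_smul_of_rnDeriv_le {μ ν κ : Measure Ω} [μ.HaveLebesgueDecomposition κ] {c : ℝ≥0∞}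
    (hμ : μ ≪ κ) (h : μ.rnDeriv κ ≤ᵐ[κ] fun x => c * ν.rnDeriv κ x) : μ ≤ c • ν :=
  calc μ = κ.withDensity (μ.rnDeriv κ) := (withDensity_rnDeriv_eq μ κ hμ).symm
    _ ≤ κ.withDensity (c • ν.rnDeriv κ) := withDensity_mono h
    _ = c • κ.withDensity (ν.rnDeriv κ) := withDensity_smul c (measurable_rnDeriv ν κ)
    _ ≤ c • ν := by gcongr; exact withDensity_rnDeriv_le ν κ

lemma rnDeriv_le_smul_of_le {μ ν κ : Measure Ω} [SigmaFinite κ] [ν.HaveLebesgueDecomposition κ]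
    {c : ℝ≥0∞} (hν : ν ≪ κ) (h : μ ≤ c • ν) : μ.rnDeriv κ ≤ᵐ[κ] fun x => c * ν.rnDeriv κ x := by
  refine ae_le_of_forall_setLIntegral_le_of_sigmaFinite (measurable_rnDeriv μ κ)
    fun s hs _ => ?_
  calc ∫⁻ x in s, μ.rnDeriv κ x ∂κ ≤ μ s := setLIntegral_rnDeriv_le s
    _ ≤ c * ν s := h s
    _ = ∫⁻ x in s, c * ν.rnDeriv κ x ∂κ := by
      rw [lintegral_const_mul _ (measurable_rnDeriv ν κ),
        setLIntegral_rnDeriv' hν hs]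

end MeasureTheory.Measure

noncomputable def bumpOn (Q P : Measure Ω) (τ : ℝ≥0∞) (A : Set Ω) : Measure Ω :=
  (1 + τ * P A)⁻¹ • (Q + τ • P.restrict A)

section bumpOn

variable {Q P : Measure Ω} {τ : ℝ≥0∞} {A : Set Ω}

lemma isProbabilityMeasure_bumpOn [IsProbabilityMeasure Q] [IsFiniteMeasure P] (hτ : τ ≠ ∞) :
    IsProbabilityMeasure (bumpOn Q P τ A) := by
  constructor
  have hfin : 1 + τ * P A ≠ ∞ := by finiteness
  simp only [bumpOn, Measure.smul_apply, Measure.add_apply, measure_univ, smul_eq_mul,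
    Measure.restrict_apply_univ]
  exact ENNReal.inv_mul_cancel (by simp) hfin

lemma bumpOn_le : bumpOn Q P τ A ≤ Q + τ • P :=
  calc bumpOn Q P τ A ≤ Q + τ • P.restrict A := Measure.le_iff'.2 fun s =>
        mul_le_of_le_one_left zero_le (ENNReal.inv_le_one.2 le_self_add)
    _ ≤ Q + τ • P := by gcongr; exact Measure.restrict_le_self

lemma bumpOn_absolutelyContinuous (hQ : Q ≪ P) : bumpOn Q P τ A ≪ P :=
  (Measure.absolutelyContinuous_of_le bumpOn_le).trans
    (hQ.add_left Measure.smul_absolutelyContinuous)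

lemma integral_bumpOn [IsFiniteMeasure Q] [IsFiniteMeasure P] {f : Ω → ℝ} (hfQ : Integrable f Q)
    (hfP : Integrable f P) {t : ℝ} (ht : 0 ≤ t) :
    ∫ x, f x ∂(bumpOn Q P (ENNReal.ofReal t) A) =
      (∫ x, f x ∂Q + t * ∫ x in A, f x ∂P) / (1 + t * P.real A) := by
  have hfin : ENNReal.ofReal t * P A ≠ ∞ := by finiteness
  rw [bumpOn, integral_smul_measure, integral_add_measure hfQ (hfP.restrict.smul_measure (by simp)),
    integral_smul_measure, ENNReal.toReal_inv, ENNReal.toReal_add (by simp) hfin,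
    ENNReal.toReal_mul, ENNReal.toReal_ofReal ht]
  simp [div_eq_inv_mul, Measure.real]

end bumpOn

structure IsDualSet (P : Measure Ω) (𝒬 : Set (Measure Ω)) : Prop where
  isProbabilityMeasure_absolutelyContinuous : ∀ Q ∈ 𝒬, IsProbabilityMeasure Q ∧ Q ≪ P
  self_mem : P ∈ 𝒬
  convex : ∀ Q₁ ∈ 𝒬, ∀ Q₂ ∈ 𝒬, ∀ t : ℝ, 0 ≤ t → t ≤ 1 →
    (ENNReal.ofReal t • Q₁ + ENNReal.ofReal (1 - t) • Q₂) ∈ 𝒬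

lemma IsDualSet.exists_add_le_smul {P : Measure Ω} {𝒬 : Set (Measure Ω)} (h𝒬 : IsDualSet P 𝒬)
    {Q Q₁ : Measure Ω} (hQ₁ : Q₁ ∈ 𝒬) {γ γ' : ℝ} (hγ : 0 ≤ γ) (hγγ' : γ ≤ γ') (hγ' : 0 < γ')
    (hQ : Q ≤ ENNReal.ofReal γ • Q₁) :
    ∃ Q₂ ∈ 𝒬, Q + ENNReal.ofReal (γ' - γ) • P ≤ ENNReal.ofReal γ' • Q₂ := by
  refine ⟨_, h𝒬.convex Q₁ hQ₁ P h𝒬.self_mem (γ / γ') (by positivity)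
    ((div_le_one hγ').2 hγγ'), ?_⟩
  rw [smul_add, smul_smul, smul_smul, ← ENNReal.ofReal_mul hγ'.le, ← ENNReal.ofReal_mul hγ'.le,
    mul_div_cancel₀ γ hγ'.ne', mul_one_sub, mul_div_cancel₀ γ hγ'.ne']
  gcongr

section Inflation

variable {P : Measure Ω} {𝒬 : Set (Measure Ω)} {f : Ω → ℝ} {γ γ' : ℝ}

def inflationValues (P : Measure Ω) (𝒬 : Set (Measure Ω)) (γ : ℝ) (f : Ω → ℝ) : Set ℝ :=
  {r : ℝ | ∃ Q : Measure Ω, IsProbabilityMeasure Q ∧ Q ≪ P ∧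
    (∃ Q' ∈ 𝒬, Q.rnDeriv P ≤ᵐ[P] fun ω => ENNReal.ofReal γ * Q'.rnDeriv P ω) ∧
    r = ∫ ω, f ω ∂Q}

/-- `ρ̃_γ(f)`, the `γ`-inflation of the coherent risk measure with dual set `𝒬`. -/
noncomputable def inflation (P : Measure Ω) (𝒬 : Set (Measure Ω)) (γ : ℝ) (f : Ω → ℝ) : ℝ :=
  sSup (inflationValues P 𝒬 γ f)

lemma integral_mem_inflationValues [IsProbabilityMeasure P] (hP : P ∈ 𝒬) (hγ : 1 ≤ γ) :
    ∫ ω, f ω ∂P ∈ inflationValues P 𝒬 γ f := by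
  refine ⟨P, inferInstance, .rfl, ⟨P, hP, ?_⟩, rfl⟩
  filter_upwards [Measure.rnDeriv_self P] with ω hω
  rw [hω, mul_one]
  exact ENNReal.one_le_ofReal.2 hγ

lemma inflationValues_mono (h : γ ≤ γ') : inflationValues P 𝒬 γ f ⊆ inflationValues P 𝒬 γ' f := by
  rintro r ⟨Q, hQ, hQP, ⟨Q', hQ', hdens⟩, rfl⟩
  refine ⟨Q, hQ, hQP, ⟨Q', hQ', hdens.trans (Eventually.of_forall fun ω => ?_)⟩, rfl⟩
  exact mul_le_mul_left (ENNReal.ofReal_le_ofReal h) _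

lemma le_essSup_of_mem_inflationValues (hf : MemLp f ∞ P) {r : ℝ}
    (hr : r ∈ inflationValues P 𝒬 γ f) : r ≤ essSup f P := by
  obtain ⟨Q, hQ, hQP, -, rfl⟩ := hr
  calc ∫ ω, f ω ∂Q ≤ ∫ _, essSup f P ∂Q :=
        integral_mono_ae (hf.integrable_of_absolutelyContinuous_s18 hQP) (integrable_const _)
          (hQP.ae_le hf.ae_le_essSup)
    _ = essSup f P := by simp

lemma bddAbove_inflationValues (hf : MemLp f ∞ P) : BddAbove (inflationValues P 𝒬 γ f) :=
  ⟨essSup f P, fun _ => le_essSup_of_mem_inflationValues hf⟩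

lemma inflation_le_essSup [IsProbabilityMeasure P] (hf : MemLp f ∞ P) (hP : P ∈ 𝒬) (hγ : 1 ≤ γ) :
    inflation P 𝒬 γ f ≤ essSup f P :=
  csSup_le ⟨_, integral_mem_inflationValues hP hγ⟩ fun _ => le_essSup_of_mem_inflationValues hf

lemma inflation_mono [IsProbabilityMeasure P] (hf : MemLp f ∞ P) (hP : P ∈ 𝒬) (hγ : 1 ≤ γ)
    (h : γ ≤ γ') : inflation P 𝒬 γ f ≤ inflation P 𝒬 γ' f :=
  csSup_le_csSup (bddAbove_inflationValues hf) ⟨_, integral_mem_inflationValues hP hγ⟩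
    (inflationValues_mono h)

lemma IsDualSet.integral_bumpOn_mem_inflationValues [IsProbabilityMeasure P] (h𝒬 : IsDualSet P 𝒬)
    (hγ : 1 ≤ γ) (hγγ' : γ ≤ γ') {Q Q₁ : Measure Ω} [IsProbabilityMeasure Q] (hQP : Q ≪ P)
    (hQ₁ : Q₁ ∈ 𝒬) (hdens : Q.rnDeriv P ≤ᵐ[P] fun ω => ENNReal.ofReal γ * Q₁.rnDeriv P ω)
    (A : Set Ω) : ∫ ω, f ω ∂(bumpOn Q P (ENNReal.ofReal (γ' - γ)) A) ∈ inflationValues P 𝒬 γ' f := by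
  obtain ⟨Q₂, hQ₂, hle⟩ := h𝒬.exists_add_le_smul hQ₁ (by linarith) hγγ' (by linarith)
    (Measure.le_smul_of_rnDeriv_le hQP hdens)
  obtain ⟨_, hQ₂P⟩ := h𝒬.isProbabilityMeasure_absolutelyContinuous Q₂ hQ₂
  exact ⟨_, isProbabilityMeasure_bumpOn ENNReal.ofReal_ne_top, bumpOn_absolutelyContinuous hQP,
    ⟨Q₂, hQ₂, Measure.rnDeriv_le_smul_of_le hQ₂P (bumpOn_le.trans hle)⟩, rfl⟩

lemma IsDualSet.inflation_add_setIntegral_le [IsProbabilityMeasure P] (h𝒬 : IsDualSet P 𝒬)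
    (hf : MemLp f ∞ P) (hγ : 1 ≤ γ) (hγγ' : γ ≤ γ') (A : Set Ω) :
    inflation P 𝒬 γ f + (γ' - γ) * ∫ ω in A, f ω ∂P ≤
      (1 + (γ' - γ) * P.real A) * inflation P 𝒬 γ' f := by
  have hpos : 0 < 1 + (γ' - γ) * P.real A := by
    have := sub_nonneg.2 hγγ'
    positivity
  rw [← le_sub_iff_add_le]
  refine csSup_le ⟨_, integral_mem_inflationValues h𝒬.self_mem hγ⟩ ?_
  rintro r ⟨Q, hQ, hQP, ⟨Q₁, hQ₁, hdens⟩, rfl⟩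
  have hle : _ ≤ inflation P 𝒬 γ' f := le_csSup (bddAbove_inflationValues hf)
    (h𝒬.integral_bumpOn_mem_inflationValues (f := f) hγ hγγ' hQP hQ₁ hdens A)
  rw [integral_bumpOn (hf.integrable_of_absolutelyContinuous_s18 hQP)
    (hf.integrable_of_absolutelyContinuous_s18 .rfl) (sub_nonneg.2 hγγ'), div_le_iff₀ hpos] at hle
  rw [le_sub_iff_add_le]
  linarith

lemma IsDualSet.essSup_le_inflation_of_eq [IsProbabilityMeasure P] (h𝒬 : IsDualSet P 𝒬)
    (hf : MemLp f ∞ P) (hγ : 1 ≤ γ) (hγγ' : γ < γ')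
    (heq : inflation P 𝒬 γ f = inflation P 𝒬 γ' f) : essSup f P ≤ inflation P 𝒬 γ f := by
  refine hf.essSup_le_of_ae_le <| ae_le_of_forall_setIntegral_le
    (hf.integrable_of_absolutelyContinuous_s18 .rfl) (integrable_const _) fun A _ _ => ?_
  have h := h𝒬.inflation_add_setIntegral_le hf hγ hγγ'.le A
  rw [← heq] at h
  rw [setIntegral_const, smul_eq_mul]
  nlinarith [sub_pos.2 hγγ']

end Inflation

end

theorem inflation_constancy_propagation_general
    {Ω : Type*} [MeasurableSpace Ω] (P : Measure Ω) [IsProbabilityMeasure P]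
    (𝒬 : Set (Measure Ω))
    (h𝒬 : ∀ Q ∈ 𝒬, IsProbabilityMeasure Q ∧ Q ≪ P) (hP : P ∈ 𝒬)
    -- 𝒬 is convex
    (hconv : ∀ Q₁ ∈ 𝒬, ∀ Q₂ ∈ 𝒬, ∀ t : ℝ, 0 ≤ t → t ≤ 1 →
      (ENNReal.ofReal t • Q₁ + ENNReal.ofReal (1 - t) • Q₂) ∈ 𝒬)
    -- the γ-inflations of ρ
    (infl : ℝ → Lp ℝ ⊤ P → ℝ)
    (hinfl : ∀ (γ : ℝ) (X : Lp ℝ ⊤ P), infl γ X =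
      sSup {r : ℝ | ∃ Q : Measure Ω, IsProbabilityMeasure Q ∧ Q ≪ P ∧
        (∃ Q' ∈ 𝒬, Q.rnDeriv P ≤ᵐ[P] fun ω => ENNReal.ofReal γ * Q'.rnDeriv P ω) ∧
        r = ∫ ω, X ω ∂Q})
    (X : Lp ℝ ⊤ P) (γ γ' γ'' : ℝ)
    (h1 : 1 ≤ γ) (h2 : γ < γ') (h3 : γ' ≤ γ'')
    (heq : infl γ X = infl γ' X) :
    infl γ'' X = infl γ X ∧ infl γ X = essSup (fun ω => X ω) P := by
  have hX : MemLp X ∞ P := Lp.memLp X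
  have hinfl' : ∀ β, infl β X = inflation P 𝒬 β X := fun β => hinfl β X
  simp only [hinfl'] at heq ⊢
  have hess : essSup X P ≤ inflation P 𝒬 γ X :=
    IsDualSet.essSup_le_inflation_of_eq ⟨h𝒬, hP, hconv⟩ hX h1 h2 heq
  have hle : ∀ β, 1 ≤ β → inflation P 𝒬 β X ≤ essSup X P := fun β hβ =>
    inflation_le_essSup hX hP hβ
  exact ⟨le_antisymm ((hle γ'' (by linarith)).trans hess) (inflation_mono hX hP h1 (by linarith)),
    le_antisymm (hle γ h1) hess⟩

/-- Let `ρ(X) = sup_{Q ∈ 𝒬} E^Q[X]` be a coherent risk measure whose dual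
set `𝒬` (containing `P`) is convex, closed in `L¹`, and uniformly integrable (the Lebesgue
property). Fix `X ∈ L∞(P)`. If `1 ≤ γ < γ' ≤ γ''` and the γ- and γ'-inflations of `ρ`
agree at `X`, then `ρ̃_{γ''}(X) = ρ̃_γ(X) = esssup X`. -/
theorem inflation_constancy_propagation
    {Ω : Type*} [MeasurableSpace Ω] (P : Measure Ω) [IsProbabilityMeasure P]
    (𝒬 : Set (Measure Ω))
    (h𝒬 : ∀ Q ∈ 𝒬, IsProbabilityMeasure Q ∧ Q ≪ P) (hP : P ∈ 𝒬)
    -- 𝒬 is convex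
    (hconv : ∀ Q₁ ∈ 𝒬, ∀ Q₂ ∈ 𝒬, ∀ t : ℝ, 0 ≤ t → t ≤ 1 →
      (ENNReal.ofReal t • Q₁ + ENNReal.ofReal (1 - t) • Q₂) ∈ 𝒬)
    -- 𝒬 is closed in L¹ (total variation)
    (hclosed : ∀ (Qn : ℕ → Measure Ω) (Q : Measure Ω), (∀ n, Qn n ∈ 𝒬) →
      IsProbabilityMeasure Q → Q ≪ P →
      Filter.Tendsto
        (fun n => ∫ ω, |((Qn n).rnDeriv P ω).toReal - (Q.rnDeriv P ω).toReal| ∂P)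
        Filter.atTop (nhds 0) →
      Q ∈ 𝒬)
    -- 𝒬 is uniformly integrable (Jouini–Schachermayer–Touzi: the Lebesgue property of ρ)
    (hui : ∀ ε : ℝ, 0 < ε → ∃ δ : ℝ, 0 < δ ∧ ∀ Q ∈ 𝒬, ∀ s : Set Ω, MeasurableSet s →
      P s ≤ ENNReal.ofReal δ → (Q s).toReal ≤ ε)
    -- the γ-inflations of ρ
    (infl : ℝ → Lp ℝ ⊤ P → ℝ)
    (hinfl : ∀ (γ : ℝ) (X : Lp ℝ ⊤ P), infl γ X =
      sSup {r : ℝ | ∃ Q : Measure Ω, IsProbabilityMeasure Q ∧ Q ≪ P ∧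
        (∃ Q' ∈ 𝒬, Q.rnDeriv P ≤ᵐ[P] fun ω => ENNReal.ofReal γ * Q'.rnDeriv P ω) ∧
        r = ∫ ω, X ω ∂Q})
    (X : Lp ℝ ⊤ P) (γ γ' γ'' : ℝ)
    (h1 : 1 ≤ γ) (h2 : γ < γ') (h3 : γ' ≤ γ'')
    (heq : infl γ X = infl γ' X) :
    infl γ'' X = infl γ X ∧ infl γ X = essSup (fun ω => X ω) P :=
  inflation_constancy_propagation_general P 𝒬 h𝒬 hP hconv infl hinfl X γ γ' γ'' h1 h2 h3 heq
end

section
/- Let (A, 𝒜, μ) be a finite measure space, E a separable Banach space, and F : A → 2^{E*} an 𝒜-measurable correspondence with nonempty weak-star closed values admitting at least one Gelfand-integrable selector. Then for every x ∈ E, sup over x* in the Aumann (Gelfand) integral ∫_A F(a) μ(da) of ⟨x, x*⟩ equals ∫_A sup_{x* ∈ F(a)} ⟨x, x*⟩ μ(da). -/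
/-!
Write `s a = sup_{x' ∈ F a} ⟨x, x'⟩`; the two `lintegral`s are the integrals of `s⁺` and `s⁻`.
Every integrable selector stays below `s`, which gives `≤`. Conversely, for a truncation `t` of
`s` and `ε > 0`, the sets `F a ∩ n B* ∩ {⟨x, ·⟩ ≥ t a - ε}` are weak-star compact
(Banach–Alaoglu) and depend measurably on `a`. Such a correspondence has a measurable selector:
maximize the evaluations at a dense sequence of `E` lexicographically; each successive maximum
is a measurable function of `a`, and the evaluations of the limit point are pointwise limits of
them. Gluing this selector with a fixed integrable selector where the set is empty and letting
`n → ∞`, `ε → 0` and the truncation level go to `∞` gives `≥`.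
-/

open MeasureTheory Set Filter Topology
open scoped ENNReal

section Correspondence

variable {A X : Type*} [MeasurableSpace A] [TopologicalSpace X]

def IsMeasurableCorrespondence (H : A → Set X) : Prop :=
  ∀ U : Set X, IsClosed U → MeasurableSet {a | (H a ∩ U).Nonempty}

namespace IsMeasurableCorrespondence

variable {H : A → Set X}

lemma measurableSet_nonempty (hH : IsMeasurableCorrespondence H) :
    MeasurableSet {a | (H a).Nonempty} := by
  simpa using hH univ isClosed_univ

lemma inter (hH : IsMeasurableCorrespondence H) {C : Set X} (hC : IsClosed C) :
    IsMeasurableCorrespondence fun a => H a ∩ C := fun U hU => by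
  simpa only [inter_assoc] using hH _ (hC.inter hU)

lemma measurable_biSup (hH : IsMeasurableCorrespondence H) {f : X → ℝ≥0∞} (hf : Continuous f) :
    Measurable fun a => ⨆ x ∈ H a, f x := by
  obtain ⟨D, hDc, hD⟩ := TopologicalSpace.exists_countable_dense ℝ≥0∞
  refine measurable_of_Ioi fun c => ?_
  have : (fun a => ⨆ x ∈ H a, f x) ⁻¹' Ioi c =
      ⋃ q ∈ D ∩ Ioi c, {a | (H a ∩ f ⁻¹' Ici q).Nonempty} := by
    ext a
    simp only [mem_preimage, mem_Ioi, lt_biSup_iff, mem_iUnion, mem_ofPred_eq, exists_prop]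
    constructor
    · rintro ⟨x, hx, hcx⟩
      obtain ⟨q, hqD, hcq, hqx⟩ := hD.exists_between hcx
      exact ⟨q, ⟨hqD, hcq⟩, x, hx, hqx.le⟩
    · rintro ⟨q, ⟨-, hcq⟩, x, hx, hqx⟩
      exact ⟨x, hx, hcq.trans_le hqx⟩
  rw [this]
  exact .biUnion (hDc.mono inter_subset_left) fun q _ => hH _ (isClosed_Ici.preimage hf)

lemma measurable_biInf (hH : IsMeasurableCorrespondence H) {f : X → ℝ≥0∞} (hf : Continuous f) :
    Measurable fun a => ⨅ x ∈ H a, f x := by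
  obtain ⟨D, hDc, hD⟩ := TopologicalSpace.exists_countable_dense ℝ≥0∞
  refine measurable_of_Iio fun c => ?_
  have : (fun a => ⨅ x ∈ H a, f x) ⁻¹' Iio c =
      ⋃ q ∈ D ∩ Iio c, {a | (H a ∩ f ⁻¹' Iic q).Nonempty} := by
    ext a
    simp only [mem_preimage, mem_Iio, lt_biInf_iff, mem_iUnion, mem_ofPred_eq, exists_prop]
    constructor
    · rintro ⟨x, hx, hxc⟩
      obtain ⟨q, hqD, hxq, hqc⟩ := hD.exists_between hxc
      exact ⟨q, ⟨hqD, hqc⟩, x, hx, hxq.le⟩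
    · rintro ⟨q, ⟨-, hqc⟩, x, hx, hxq⟩
      exact ⟨x, hx, hxq.trans_lt hqc⟩
  rw [this]
  exact .biUnion (hDc.mono inter_subset_left) fun q _ => hH _ (isClosed_Iic.preimage hf)

end IsMeasurableCorrespondence

lemma IsCompact.le_sSup_image_iff {K : Set X} (hK : IsCompact K) (hne : K.Nonempty)
    {h : X → ℝ} (hh : Continuous h) {c : ℝ} : c ≤ sSup (h '' K) ↔ ∃ x ∈ K, c ≤ h x := by
  refine ⟨fun hc => ?_, fun ⟨x, hx, hcx⟩ => ?_⟩
  · obtain ⟨x, hx, hxs⟩ := (hK.image hh).sSup_mem (hne.image h)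
    exact ⟨x, hx, hxs ▸ hc⟩
  · exact hcx.trans (le_csSup (hK.image hh).bddAbove (mem_image_of_mem h hx))

namespace IsMeasurableCorrespondence

variable {H : A → Set X} {h : X → ℝ}

lemma measurable_sSup_image (hH : IsMeasurableCorrespondence H) (hK : ∀ a, IsCompact (H a))
    (hh : Continuous h) : Measurable fun a => sSup (h '' H a) := by
  refine measurable_of_Ici fun c => ?_
  -- `sSup ∅ = 0` in `ℝ`, so the points with empty value lie in the preimage iff `c ≤ 0`
  have : (fun a => sSup (h '' H a)) ⁻¹' Ici c =
      {a | (H a ∩ h ⁻¹' Ici c).Nonempty} ∪ ({a | (H a).Nonempty}ᶜ ∩ {_a | c ≤ 0}) := by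
    ext a
    rcases (H a).eq_empty_or_nonempty with hempty | hne
    · simp [hempty]
    · simp only [mem_preimage, mem_Ici, (hK a).le_sSup_image_iff hne hh, mem_union, mem_inter_iff,
        mem_ofPred_eq, mem_compl_iff, hne, not_true_eq_false, false_and, or_false]
      rfl
  rw [this]
  exact (hH _ (isClosed_Ici.preimage hh)).union
    (hH.measurableSet_nonempty.compl.inter (.const _))

lemma inter_preimage_Ici (hH : IsMeasurableCorrespondence H) (hK : ∀ a, IsCompact (H a))
    (hh : Continuous h) {m : A → ℝ} (hm : Measurable m) :
    IsMeasurableCorrespondence fun a => H a ∩ h ⁻¹' Ici (m a) := fun U hU => by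
  have hHU := hH.inter hU
  have hKU : ∀ a, IsCompact (H a ∩ U) := fun a => (hK a).inter_right hU
  have : {a | (H a ∩ h ⁻¹' Ici (m a) ∩ U).Nonempty} =
      {a | (H a ∩ U).Nonempty} ∩ {a | m a ≤ sSup (h '' (H a ∩ U))} := by
    ext a
    simp only [mem_ofPred_eq, mem_inter_iff]
    constructor
    · rintro ⟨x, ⟨hxH, hxm⟩, hxU⟩
      exact ⟨⟨x, hxH, hxU⟩, ((hKU a).le_sSup_image_iff ⟨x, hxH, hxU⟩ hh).2 ⟨x, ⟨hxH, hxU⟩, hxm⟩⟩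
    · rintro ⟨hne, hm⟩
      obtain ⟨x, ⟨hxH, hxU⟩, hxm⟩ := ((hKU a).le_sSup_image_iff hne hh).1 hm
      exact ⟨x, ⟨hxH, hxm⟩, hxU⟩
  rw [this]
  exact hHU.measurableSet_nonempty.inter (measurableSet_le hm (hHU.measurable_sSup_image hKU hh))

end IsMeasurableCorrespondence

end Correspondence

section LexicographicSelection

variable {X : Type*}

noncomputable def lexMaxStep (K : Set X) (h : X → ℝ) : Set X :=
  K ∩ h ⁻¹' Ici (sSup (h '' K))

noncomputable def lexRefine (K : Set X) (h : ℕ → X → ℝ) : ℕ → Set X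
  | 0 => K
  | i + 1 => lexMaxStep (lexRefine K h i) (h i)

variable {K : Set X} {h : ℕ → X → ℝ}

lemma lexRefine_succ_subset (i : ℕ) : lexRefine K h (i + 1) ⊆ lexRefine K h i :=
  inter_subset_left

variable [TopologicalSpace X]

lemma isCompact_lexRefine (hK : IsCompact K) (hh : ∀ i, Continuous (h i)) (i : ℕ) :
    IsCompact (lexRefine K h i) := by
  induction i with
  | zero => exact hK
  | succ i ih => exact ih.inter_right (isClosed_Ici.preimage (hh i))

lemma lexRefine_nonempty (hK : IsCompact K) (hne : K.Nonempty) (hh : ∀ i, Continuous (h i))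
    (i : ℕ) : (lexRefine K h i).Nonempty := by
  induction i with
  | zero => exact hne
  | succ i ih => exact ((isCompact_lexRefine hK hh i).le_sSup_image_iff ih (hh i)).1 le_rfl

lemma apply_eq_sSup_of_mem_lexRefine_succ (hK : IsCompact K) (hh : ∀ i, Continuous (h i))
    {i : ℕ} {x : X} (hx : x ∈ lexRefine K h (i + 1)) :
    h i x = sSup (h i '' lexRefine K h i) :=
  le_antisymm (le_csSup ((isCompact_lexRefine hK hh i).image (hh i)).bddAbove
    (mem_image_of_mem _ hx.1)) hx.2

variable {A : Type*} [MeasurableSpace A] {H : A → Set X}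

lemma isMeasurableCorrespondence_lexRefine (hH : IsMeasurableCorrespondence H)
    (hK : ∀ a, IsCompact (H a)) (hh : ∀ i, Continuous (h i)) (i : ℕ) :
    IsMeasurableCorrespondence fun a => lexRefine (H a) h i := by
  induction i with
  | zero => exact hH
  | succ i ih =>
    have hKi := fun a => isCompact_lexRefine (hK a) hh i
    exact ih.inter_preimage_Ici hKi (hh i) (ih.measurable_sSup_image hKi (hh i))

theorem IsMeasurableCorrespondence.exists_measurable_selection [T2Space X] [Nonempty X]
    (hH : IsMeasurableCorrespondence H) (hK : ∀ a, IsCompact (H a))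
    (hh : ∀ i, Continuous (h i)) :
    ∃ g : A → X, (∀ a, (H a).Nonempty → g a ∈ H a) ∧ ∀ i, Measurable fun a => h i (g a) := by
  classical
  -- `g a` maximizes `h 0, h 1, …` lexicographically, so `h i (g a)` is a measurable supremum
  have hinter : ∀ a, (H a).Nonempty → (⋂ i, lexRefine (H a) h i).Nonempty := fun a hne =>
    IsCompact.nonempty_iInter_of_sequence_nonempty_isCompact_isClosed _ lexRefine_succ_subset
      (lexRefine_nonempty (hK a) hne hh) (hK a)
      fun i => (isCompact_lexRefine (hK a) hh i).isClosed
  let g a := if hne : (H a).Nonempty then (hinter a hne).some else Classical.arbitrary X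
  have hg : ∀ a (hne : (H a).Nonempty) i, g a ∈ lexRefine (H a) h i := fun a hne =>
    mem_iInter.1 (by simpa [g, hne] using (hinter a hne).some_mem)
  refine ⟨g, fun a hne => hg a hne 0, fun i => ?_⟩
  have : (fun a => h i (g a)) = fun a => if (H a).Nonempty
      then sSup (h i '' lexRefine (H a) h i) else h i (Classical.arbitrary X) := by
    ext a
    split_ifs with hne
    · exact apply_eq_sSup_of_mem_lexRefine_succ (hK a) hh (hg a hne (i + 1))
    · simp [g, hne]
  rw [this]
  exact .ite hH.measurableSet_nonempty
    ((isMeasurableCorrespondence_lexRefine hH hK hh i).measurable_sSup_image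
      (fun a => isCompact_lexRefine (hK a) hh i) (hh i)) measurable_const

end LexicographicSelection

section WeakDual

variable {A : Type*} [MeasurableSpace A] {E : Type*} [NormedAddCommGroup E] [NormedSpace ℝ E]

theorem IsMeasurableCorrespondence.exists_weakStar_measurable_selection
    [TopologicalSpace.SeparableSpace E] {H : A → Set (WeakDual ℝ E)}
    (hH : IsMeasurableCorrespondence H) (hK : ∀ a, IsCompact (H a)) :
    ∃ g : A → WeakDual ℝ E, (∀ a, (H a).Nonempty → g a ∈ H a) ∧
      ∀ y : E, Measurable fun a => g a y := by
  obtain ⟨g, hgH, hgm⟩ := hH.exists_measurable_selection hK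
    (h := fun i x' => x' (TopologicalSpace.denseSeq E i)) fun i => WeakDual.eval_continuous _
  refine ⟨g, hgH, fun y => ?_⟩
  -- each `g a` is continuous on `E`, so `g · y` is a pointwise limit along the dense sequence
  obtain ⟨u, hu_mem, hu⟩ := mem_closure_iff_seq_limit.1
    ((TopologicalSpace.denseRange_denseSeq E).closure_range ▸ mem_univ y)
  choose i hi using hu_mem
  refine measurable_of_tendsto_metrizable (f := fun j a => g a (u j)) (fun j => ?_)
    (tendsto_pi_nhds.2 fun a => ((WeakDual.toStrongDual (g a)).continuous.tendsto y).comp hu)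
  simpa only [← hi j] using hgm (i j)

end WeakDual

section Strassen

variable {A : Type*} [MeasurableSpace A] {μ : Measure A}
  {E : Type*} [NormedAddCommGroup E] [NormedSpace ℝ E]

lemma MeasureTheory.Integrable.lintegral_ofReal_ne_top {f : A → ℝ} (hf : Integrable f μ) :
    ∫⁻ a, ENNReal.ofReal (f a) ∂μ ≠ ∞ :=
  ((lintegral_mono fun a => Real.ofReal_le_enorm (f a)).trans_lt hf.2).ne

lemma EReal.coe_toReal_sub_toReal {p q : ℝ≥0∞} (hp : p ≠ ∞) (hq : q ≠ ∞) :
    ((p.toReal - q.toReal : ℝ) : EReal) = p - q := by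
  rw [EReal.coe_sub, EReal.coe_ennreal_toReal hp, EReal.coe_ennreal_toReal hq]

/-- `⨆ ofReal v` and `⨅ ofReal (-v)` are the positive and negative parts of `sup v`, so their
difference lies below every upper bound of `v` on `S`. -/
lemma toReal_sub_toReal_le_of_forall_le {ι : Type*} {S : Set ι} (hS : S.Nonempty) {v : ι → ℝ}
    {c : ℝ} (hc : ∀ i ∈ S, v i ≤ c) {b : ℝ≥0∞} (hb : b ≤ ⨆ i ∈ S, ENNReal.ofReal (v i)) :
    b.toReal - (⨅ i ∈ S, ENNReal.ofReal (-v i)).toReal ≤ c := by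
  obtain ⟨i₀, hi₀⟩ := hS
  have hφ : ⨆ i ∈ S, ENNReal.ofReal (v i) ≤ ENNReal.ofReal c :=
    iSup₂_le fun i hi => ENNReal.ofReal_le_ofReal (hc i hi)
  have hψ : ENNReal.ofReal (-c) ≤ ⨅ i ∈ S, ENNReal.ofReal (-v i) :=
    le_iInf₂ fun i hi => ENNReal.ofReal_le_ofReal (neg_le_neg (hc i hi))
  have hb_le : b.toReal ≤ max c 0 :=
    (ENNReal.toReal_mono ENNReal.ofReal_ne_top (hb.trans hφ)).trans_eq ENNReal.toReal_ofReal'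
  have hψ_ge : max (-c) 0 ≤ (⨅ i ∈ S, ENNReal.ofReal (-v i)).toReal :=
    ENNReal.toReal_ofReal'.symm.trans_le <| ENNReal.toReal_mono
      (ne_top_of_le_ne_top ENNReal.ofReal_ne_top (iInf₂_le i₀ hi₀)) hψ
  rcases le_total c 0 with h | h
  · rw [max_eq_right h] at hb_le
    rw [max_eq_left (neg_nonneg.2 h)] at hψ_ge
    linarith
  · rw [max_eq_left h] at hb_le
    linarith [le_max_right (-c) 0]

lemma tendsto_integral_piecewise {G : Type*} [NormedAddCommGroup G] [NormedSpace ℝ G]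
    {B : ℕ → Set A} (hB : ∀ n, MeasurableSet (B n)) (hmono : Monotone B)
    (hcover : ⋃ n, B n = univ) [∀ n, DecidablePred (· ∈ B n)]
    {g h : A → G} (hg : Integrable g μ) (hh : Integrable h μ) :
    Tendsto (fun n => ∫ a, (B n).piecewise g h a ∂μ) atTop (𝓝 (∫ a, g a ∂μ)) := by
  simp_rw [integral_piecewise (hB _) hg.integrableOn hh.integrableOn]
  have hin := tendsto_setIntegral_of_monotone hB hmono hg.integrableOn
  have hout := tendsto_setIntegral_of_antitone (fun n => (hB n).compl)
    (fun m n hmn => compl_subset_compl.2 (hmono hmn)) ⟨0, hh.integrableOn⟩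
  rw [hcover, setIntegral_univ] at hin
  rw [← compl_iUnion, hcover, compl_univ, Measure.restrict_empty, integral_zero_measure] at hout
  simpa using hin.add hout

lemma integrable_apply_piecewise [IsFiniteMeasure μ] {B : Set A} [DecidablePred (· ∈ B)]
    (hB : MeasurableSet B) {u f : A → WeakDual ℝ E} {r : ℝ}
    (hu : ∀ y, Measurable fun a => u a y) (hur : ∀ a ∈ B, ‖WeakDual.toStrongDual (u a)‖ ≤ r)
    (hf : ∀ y, Integrable (fun a => f a y) μ) (y : E) :
    Integrable (fun a => B.piecewise u f a y) μ := by
  have : (fun a => B.piecewise u f a y) = B.piecewise (fun a => u a y) (fun a => f a y) := by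
    ext a
    by_cases ha : a ∈ B <;> simp [ha]
  rw [this]
  refine .piecewise hB (Measure.integrableOn_of_bounded (measure_ne_top μ B)
    (hu y).aestronglyMeasurable (M := r * ‖y‖) ?_) (hf y).integrableOn
  refine ae_restrict_of_forall_mem hB fun a ha => ?_
  exact ((WeakDual.toStrongDual (u a)).le_opNorm y).trans
    (mul_le_mul_of_nonneg_right (hur a ha) (norm_nonneg y))

noncomputable def aumannSupport (μ : Measure A) (F : A → Set (WeakDual ℝ E)) (x : E) : EReal :=
  ⨆ f : {f : A → WeakDual ℝ E //
      (∀ y : E, Integrable (fun a => f a y) μ) ∧ ∀ᵐ a ∂μ, f a ∈ F a},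
    (((∫ a, f.1 a x ∂μ) : ℝ) : EReal)

variable {F : A → Set (WeakDual ℝ E)} {f : A → WeakDual ℝ E}

lemma le_aumannSupport (hf : ∀ y, Integrable (fun a => f a y) μ) (hfF : ∀ᵐ a ∂μ, f a ∈ F a)
    (x : E) : (((∫ a, f a x ∂μ) : ℝ) : EReal) ≤ aumannSupport μ F x :=
  le_iSup (fun g : {f : A → WeakDual ℝ E //
      (∀ y : E, Integrable (fun a => f a y) μ) ∧ ∀ᵐ a ∂μ, f a ∈ F a} =>
    (((∫ a, g.1 a x ∂μ) : ℝ) : EReal)) ⟨f, hf, hfF⟩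

theorem aumannSupport_le (x : E) :
    aumannSupport μ F x ≤ ((∫⁻ a, (⨆ x' ∈ F a, ENNReal.ofReal (x' x)) ∂μ : ℝ≥0∞) : EReal) -
      ((∫⁻ a, (⨅ x' ∈ F a, ENNReal.ofReal (-(x' x))) ∂μ : ℝ≥0∞) : EReal) := by
  refine iSup_le fun ⟨g, hg, hgF⟩ => ?_
  rw [integral_eq_lintegral_pos_part_sub_lintegral_neg_part (hg x),
    EReal.coe_toReal_sub_toReal (hg x).lintegral_ofReal_ne_top
      (Integrable.lintegral_ofReal_ne_top (f := fun a => -g a x) (hg x).neg)]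
  refine EReal.sub_le_sub (EReal.coe_ennreal_le_coe_ennreal_iff.2 ?_)
    (EReal.coe_ennreal_le_coe_ennreal_iff.2 ?_)
  · exact lintegral_mono_ae
      (hgF.mono fun a ha => le_iSup₂ (f := fun y _ => ENNReal.ofReal (y x)) _ ha)
  · exact lintegral_mono_ae (hgF.mono fun a ha => iInf₂_le _ ha)

variable [IsFiniteMeasure μ] [TopologicalSpace.SeparableSpace E]

theorem integral_le_aumannSupport_of_exists_mem (hF : IsMeasurableCorrespondence F)
    (hcl : ∀ a, IsClosed (F a)) (hf : ∀ y, Integrable (fun a => f a y) μ)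
    (hfF : ∀ᵐ a ∂μ, f a ∈ F a) (x : E) {s : A → ℝ} (hs : Integrable s μ) (hsm : Measurable s)
    (hsF : ∀ a, ∃ y ∈ F a, s a ≤ y x) :
    ((∫ a, s a ∂μ : ℝ) : EReal) ≤ aumannSupport μ F x := by
  classical
  let ball (n : ℕ) : Set (WeakDual ℝ E) := WeakDual.toStrongDual ⁻¹' Metric.closedBall 0 n
  have hFball : ∀ n a, IsCompact (F a ∩ ball n) := fun n a =>
    (WeakDual.isCompact_closedBall 0 n).inter_left (hcl a)
  let G (n : ℕ) (a : A) := F a ∩ ball n ∩ (fun y : WeakDual ℝ E => y x) ⁻¹' Ici (s a)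
  have hG : ∀ n, IsMeasurableCorrespondence (G n) := fun n =>
    (hF.inter (WeakDual.isClosed_closedBall 0 n)).inter_preimage_Ici (hFball n)
      (WeakDual.eval_continuous x) hsm
  choose u huG hu using fun n => (hG n).exists_weakStar_measurable_selection fun a =>
    (hFball n a).inter_right (isClosed_Ici.preimage (WeakDual.eval_continuous x))
  -- off `B n` we fall back on `f`, which keeps the glued selectors Gelfand integrable
  let B (n : ℕ) : Set A := {a | (G n a).Nonempty}
  have hBmono : Monotone B := fun m n hmn a ⟨y, ⟨hyF, hyb⟩, hys⟩ =>
    ⟨y, ⟨hyF, mem_preimage.2 (Metric.closedBall_subset_closedBall (by exact_mod_cast hmn) hyb)⟩,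
      hys⟩
  have hBcover : ⋃ n, B n = univ := eq_univ_of_forall fun a => by
    obtain ⟨y, hyF, hys⟩ := hsF a
    obtain ⟨n, hn⟩ := exists_nat_ge ‖WeakDual.toStrongDual y‖
    exact mem_iUnion.2 ⟨n, y, ⟨hyF, mem_preimage.2 (mem_closedBall_zero_iff.2 hn)⟩, hys⟩
  have hg : ∀ n y, Integrable (fun a => (B n).piecewise (u n) f a y) μ := fun n =>
    integrable_apply_piecewise (hG n).measurableSet_nonempty (hu n)
      (fun a ha => mem_closedBall_zero_iff.1 (huG n a ha).1.2) hf
  have hgF : ∀ n, ∀ᵐ a ∂μ, (B n).piecewise (u n) f a ∈ F a := fun n => hfF.mono fun a ha => by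
    by_cases hB : a ∈ B n
    · simpa [hB] using (huG n a hB).1.1
    · simpa [hB] using ha
  have hsg : ∀ n, ∫ a, (B n).piecewise s (fun a => f a x) a ∂μ ≤
      ∫ a, (B n).piecewise (u n) f a x ∂μ := fun n =>
    integral_mono
      (Integrable.piecewise (hG n).measurableSet_nonempty hs.integrableOn (hf x).integrableOn)
      (hg n x) fun a => by
        by_cases hB : a ∈ B n
        · simpa [hB] using (huG n a hB).2
        · simp [hB]
  refine le_of_tendsto ((continuous_coe_real_ereal.tendsto _).comp
    (tendsto_integral_piecewise (fun n => (hG n).measurableSet_nonempty) hBmono hBcover hs (hf x)))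
    (Eventually.of_forall fun n => ?_)
  exact (EReal.coe_le_coe_iff.2 (hsg n)).trans (le_aumannSupport (hg n) (hgF n) x)

theorem integral_le_aumannSupport (hF : IsMeasurableCorrespondence F)
    (hcl : ∀ a, IsClosed (F a)) (hf : ∀ y, Integrable (fun a => f a y) μ)
    (hfF : ∀ᵐ a ∂μ, f a ∈ F a) (x : E) {t : A → ℝ} (ht : Integrable t μ) (htm : Measurable t)
    (htF : ∀ a c, (∀ y ∈ F a, y x ≤ c) → t a ≤ c) :
    ((∫ a, t a ∂μ : ℝ) : EReal) ≤ aumannSupport μ F x := by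
  have hε : ∀ ε > 0, ((∫ a, t a ∂μ - ε * μ.real univ : ℝ) : EReal) ≤ aumannSupport μ F x := by
    intro ε hε
    have := integral_le_aumannSupport_of_exists_mem hF hcl hf hfF x (s := fun a => t a - ε)
      (ht.sub (integrable_const ε)) (htm.sub_const ε) fun a => by
        by_contra! hlt
        linarith [htF a _ fun y hy => (hlt y hy).le]
    rwa [integral_sub ht (integrable_const ε), integral_const, smul_eq_mul, mul_comm] at this
  have hlim : Tendsto (fun ε => ((∫ a, t a ∂μ - ε * μ.real univ : ℝ) : EReal)) (𝓝[>] 0)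
      (𝓝 (∫ a, t a ∂μ : ℝ)) := by
    refine (continuous_coe_real_ereal.tendsto _).comp (Tendsto.mono_left ?_ nhdsWithin_le_nhds)
    simpa using (tendsto_const_nhds (x := ∫ a, t a ∂μ)).sub
      ((tendsto_id (x := 𝓝 (0 : ℝ))).mul_const (μ.real univ))
  exact le_of_tendsto hlim (eventually_nhdsWithin_of_forall hε)

theorem lintegral_sub_lintegral_le_aumannSupport (hne : ∀ a, (F a).Nonempty)
    (hF : IsMeasurableCorrespondence F) (hcl : ∀ a, IsClosed (F a))
    (hf : ∀ y, Integrable (fun a => f a y) μ) (hfF : ∀ᵐ a ∂μ, f a ∈ F a) (x : E)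
    (hψ_fin : ∫⁻ a, (⨅ x' ∈ F a, ENNReal.ofReal (-(x' x))) ∂μ ≠ ∞) :
    ((∫⁻ a, (⨆ x' ∈ F a, ENNReal.ofReal (x' x)) ∂μ : ℝ≥0∞) : EReal) -
      ((∫⁻ a, (⨅ x' ∈ F a, ENNReal.ofReal (-(x' x))) ∂μ : ℝ≥0∞) : EReal) ≤
      aumannSupport μ F x := by
  set φ := fun a => ⨆ x' ∈ F a, ENNReal.ofReal (x' x)
  set ψ := fun a => ⨅ x' ∈ F a, ENNReal.ofReal (-(x' x))
  have hφ : Measurable φ :=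
    hF.measurable_biSup (ENNReal.continuous_ofReal.comp (WeakDual.eval_continuous x))
  have hψ : Measurable ψ :=
    hF.measurable_biInf (ENNReal.continuous_ofReal.comp (WeakDual.eval_continuous x).neg)
  have hM : ∀ M : ℕ, ((∫⁻ a, min (φ a) M ∂μ : ℝ≥0∞) : EReal) ≤
      aumannSupport μ F x + ∫⁻ a, ψ a ∂μ := fun M => by
    have hφM : Measurable fun a => min (φ a) M := hφ.min measurable_const
    have hφM_fin : ∫⁻ a, min (φ a) M ∂μ ≠ ∞ := ne_top_of_le_ne_top
      (by simpa using ENNReal.mul_ne_top (ENNReal.natCast_ne_top M) (measure_ne_top μ univ))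
      (lintegral_mono fun a => min_le_right (φ a) M)
    have hφM_int := integrable_toReal_of_lintegral_ne_top hφM.aemeasurable hφM_fin
    have hψ_int := integrable_toReal_of_lintegral_ne_top hψ.aemeasurable hψ_fin
    have := integral_le_aumannSupport hF hcl hf hfF x
      (t := fun a => (min (φ a) M).toReal - (ψ a).toReal) (hφM_int.sub hψ_int)
      (hφM.ennreal_toReal.sub hψ.ennreal_toReal)
      fun a c hc => toReal_sub_toReal_le_of_forall_le (hne a) hc (min_le_left _ _)
    rw [integral_sub hφM_int hψ_int, integral_toReal hφM.aemeasurable (ae_lt_top hφM hφM_fin),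
      integral_toReal hψ.aemeasurable (ae_lt_top hψ hψ_fin),
      EReal.coe_toReal_sub_toReal hφM_fin hψ_fin] at this
    exact (EReal.sub_le_iff_le_add (.inl (EReal.coe_ennreal_ne_bot _))
      (.inl (EReal.coe_ennreal_eq_top_iff.not.2 hψ_fin))).1 this
  have h0 : 0 ≤ aumannSupport μ F x + ∫⁻ a, ψ a ∂μ := (EReal.coe_ennreal_nonneg _).trans (hM 0)
  refine EReal.sub_le_of_le_add ?_
  rw [← EReal.coe_toENNReal h0, EReal.coe_ennreal_le_coe_ennreal_iff]
  calc ∫⁻ a, φ a ∂μ = ∫⁻ a, ⨆ M : ℕ, min (φ a) M ∂μ := by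
        simp_rw [← inf_iSup_eq, ENNReal.iSup_natCast, inf_top_eq]
    _ = ⨆ M : ℕ, ∫⁻ a, min (φ a) M ∂μ :=
        lintegral_iSup (fun M => hφ.min measurable_const)
          fun m n hmn a => min_le_min_left _ (by exact_mod_cast hmn)
    _ ≤ _ := iSup_le fun M => by simpa using EReal.toENNReal_le_toENNReal (hM M)

end Strassen

theorem weakStar_strassen_general
    {A : Type*} [MeasurableSpace A] (μ : Measure A) [IsFiniteMeasure μ]
    {E : Type*} [NormedAddCommGroup E] [NormedSpace ℝ E]
    [TopologicalSpace.SeparableSpace E]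
    (F : A → Set (WeakDual ℝ E))
    (hne : ∀ a, (F a).Nonempty)
    (hcl : ∀ a, IsClosed (F a))
    (hFmeas : ∀ U : Set (WeakDual ℝ E), IsClosed U → MeasurableSet {a | (F a ∩ U).Nonempty})
    (hsel : ∃ f : A → WeakDual ℝ E,
      (∀ x : E, Integrable (fun a => f a x) μ) ∧ ∀ᵐ a ∂μ, f a ∈ F a)
    (x : E) :
    (⨆ f : {f : A → WeakDual ℝ E //
        (∀ y : E, Integrable (fun a => f a y) μ) ∧ ∀ᵐ a ∂μ, f a ∈ F a},
      (((∫ a, f.1 a x ∂μ) : ℝ) : EReal)) =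
      ((∫⁻ a, (⨆ x' ∈ F a, ENNReal.ofReal (x' x)) ∂μ : EReal)) -
        ((∫⁻ a, (⨅ x' ∈ F a, ENNReal.ofReal (-(x' x))) ∂μ : EReal)) := by
  obtain ⟨f, hf, hfF⟩ := hsel
  have hψ_fin : ∫⁻ a, (⨅ x' ∈ F a, ENNReal.ofReal (-(x' x))) ∂μ ≠ ∞ :=
    ne_top_of_le_ne_top (Integrable.lintegral_ofReal_ne_top (f := fun a => -f a x) (hf x).neg)
      (lintegral_mono_ae (hfF.mono fun a ha => iInf₂_le _ ha))
  exact le_antisymm (aumannSupport_le x)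
    (lintegral_sub_lintegral_le_aumannSupport hne hFmeas hcl hf hfF x hψ_fin)

/-- weak-star Strassen theorem: Let `(A, 𝒜, μ)` be a finite complete measure
space, `E` a separable Banach space, and `F : A → Set E*` an `𝒜`-measurable correspondence
(inverse images of weak-star closed sets are measurable) with nonempty weak-star closed
values admitting a Gelfand-integrable selector. Then for every `x ∈ E`, the supremum of
`⟨x, x*⟩` over the Aumann–Gelfand integral `∫_A F dμ` (i.e. over Gelfand integrals of
integrable selectors) equals `∫_A sup_{x* ∈ F(a)} ⟨x, x*⟩ dμ`, in the extended reals (the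
right-hand side is the difference of the `lintegral`s of the positive and negative parts). -/
theorem weakStar_strassen
    {A : Type*} [MeasurableSpace A] (μ : Measure A) [IsFiniteMeasure μ] [μ.IsComplete]
    {E : Type*} [NormedAddCommGroup E] [NormedSpace ℝ E] [CompleteSpace E]
    [TopologicalSpace.SeparableSpace E]
    (F : A → Set (WeakDual ℝ E))
    (hne : ∀ a, (F a).Nonempty)
    (hcl : ∀ a, IsClosed (F a))
    (hFmeas : ∀ U : Set (WeakDual ℝ E), IsClosed U → MeasurableSet {a | (F a ∩ U).Nonempty})
    (hsel : ∃ f : A → WeakDual ℝ E,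
      (∀ x : E, Integrable (fun a => f a x) μ) ∧ ∀ᵐ a ∂μ, f a ∈ F a)
    (x : E) :
    (⨆ f : {f : A → WeakDual ℝ E //
        (∀ y : E, Integrable (fun a => f a y) μ) ∧ ∀ᵐ a ∂μ, f a ∈ F a},
      (((∫ a, f.1 a x ∂μ) : ℝ) : EReal)) =
      ((∫⁻ a, (⨆ x' ∈ F a, ENNReal.ofReal (x' x)) ∂μ : EReal)) -
        ((∫⁻ a, (⨅ x' ∈ F a, ENNReal.ofReal (-(x' x))) ∂μ : EReal)) :=
  weakStar_strassen_general μ F hne hcl hFmeas hsel x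
end
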